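/- arXiv:2101.10574 — 11 statements merged into one kernel-verified Lean document; each statement's English description precedes it below -/
import Mathlib

section
/- If A, B > 0, k ∈ ℕ, and there exist nonnegative reals x₁,…,x_k with x₁³+⋯+x_k³ = A³ and x₁⁵+⋯+x_k⁵ = B⁵, then (1/k)^(2/15) ≤ B/A ≤ 1. -/
/-!
If `∑ xᵢ³ = A³` with `xᵢ ≥ 0` then every `xᵢ ≤ A`, so `∑ xᵢ⁵ ≤ A² ∑ xᵢ³ = A⁵`, i.e. `B ≤ A`.
Conversely the power-mean (Hölder) inequality for the exponent `5/3`, applied to the numbers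
`xᵢ³`, gives `(∑ xᵢ³)⁵ ≤ k² (∑ xᵢ⁵)³`, i.e. `A¹⁵ ≤ k² B¹⁵`.
-/

open Finset

variable {ι : Type*} (s : Finset ι) {x : ι → ℝ}

theorem sum_pow_le_pow_of_sum_pow_eq {A : ℝ} {m n : ℕ} (hm : m ≠ 0) (hmn : m ≤ n)
    (hx : ∀ i ∈ s, 0 ≤ x i) (hA : 0 ≤ A) (h : ∑ i ∈ s, x i ^ m = A ^ m) :
    ∑ i ∈ s, x i ^ n ≤ A ^ n := by
  have hxA : ∀ i ∈ s, x i ≤ A := fun i hi ↦ by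
    refine (pow_le_pow_iff_left₀ (hx i hi) hA hm).mp ?_
    rw [← h]
    exact single_le_sum (f := fun j ↦ x j ^ m) (fun j hj ↦ pow_nonneg (hx j hj) m) hi
  calc ∑ i ∈ s, x i ^ n = ∑ i ∈ s, x i ^ m * x i ^ (n - m) := by
        simp only [← pow_add, Nat.add_sub_cancel' hmn]
    _ ≤ ∑ i ∈ s, x i ^ m * A ^ (n - m) := by
        gcongr with i hi
        exacts [pow_nonneg (hx i hi) m, hx i hi, hxA i hi]
    _ = A ^ n := by rw [← sum_mul, h, ← pow_add, Nat.add_sub_cancel' hmn]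

theorem pow_sum_pow_le_card_pow_mul_pow_sum_pow {m n : ℕ} (hm : m ≠ 0) (hmn : m ≤ n)
    (hx : ∀ i ∈ s, 0 ≤ x i) :
    (∑ i ∈ s, x i ^ m) ^ n ≤ (#s : ℝ) ^ (n - m) * (∑ i ∈ s, x i ^ n) ^ m := by
  have hm' : (0 : ℝ) < m := by positivity
  set p : ℝ := n / m
  have hp : 1 ≤ p := (one_le_div hm').mpr (by exact_mod_cast hmn)
  have hxp : ∀ i ∈ s, (x i ^ m) ^ p = x i ^ n := fun i hi ↦ by
    rw [← Real.rpow_natCast, ← Real.rpow_mul (hx i hi), mul_div_cancel₀ _ hm'.ne',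
      Real.rpow_natCast]
  have holder := Real.rpow_sum_le_const_mul_sum_rpow_of_nonneg s hp
    (fun i hi ↦ pow_nonneg (hx i hi) m)
  rw [sum_congr rfl hxp] at holder
  have hS : 0 ≤ ∑ i ∈ s, x i ^ m := sum_nonneg fun i hi ↦ pow_nonneg (hx i hi) m
  have hcard : (0 : ℝ) ≤ #s := Nat.cast_nonneg _
  calc (∑ i ∈ s, x i ^ m) ^ n = ((∑ i ∈ s, x i ^ m) ^ p) ^ m := by
        rw [← Real.rpow_mul_natCast hS, div_mul_cancel₀ _ hm'.ne', Real.rpow_natCast]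
    _ ≤ ((#s : ℝ) ^ (p - 1) * ∑ i ∈ s, x i ^ n) ^ m := by gcongr
    _ = (#s : ℝ) ^ (n - m) * (∑ i ∈ s, x i ^ n) ^ m := by
        rw [mul_pow, ← Real.rpow_mul_natCast hcard, sub_mul, div_mul_cancel₀ _ hm'.ne', one_mul,
          ← Nat.cast_sub hmn, Real.rpow_natCast]

theorem one_div_rpow_le_div_of_pow_le_mul_pow {A B c : ℝ} {e N : ℕ} (hA : 0 < A) (hB : 0 ≤ B)
    (hc : 0 ≤ c) (hN : N ≠ 0) (h : A ^ N ≤ c ^ e * B ^ N) :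
    (1 / c) ^ ((e : ℝ) / N) ≤ B / A := by
  refine (pow_le_pow_iff_left₀ (by positivity) (by positivity) hN).mp ?_
  calc ((1 / c) ^ ((e : ℝ) / N)) ^ N = A ^ N / c ^ e / A ^ N := by
        rw [← Real.rpow_mul_natCast (by positivity), div_mul_cancel₀ _ (by exact_mod_cast hN),
          Real.rpow_natCast, div_right_comm, div_self (by positivity), one_div_pow]
    _ ≤ B ^ N / A ^ N := by
        gcongr
        exact div_le_of_le_mul₀ (by positivity) (by positivity) (h.trans_eq (mul_comm _ _))
    _ = (B / A) ^ N := (div_pow B A N).symm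

theorem power_sum_ratio_bounds_general (A B : ℝ) (k : ℕ) (hA : 0 < A) (hB : 0 < B)
    (x : Fin k → ℝ) (hx : ∀ i, 0 ≤ x i)
    (h3 : ∑ i, x i ^ 3 = A ^ 3) (h5 : ∑ i, x i ^ 5 = B ^ 5) :
    ((1 : ℝ) / k) ^ ((2 : ℝ) / 15) ≤ B / A ∧ B / A ≤ 1 := by
  have hx' : ∀ i ∈ univ, 0 ≤ x i := fun i _ ↦ hx i
  have hBA : B ^ 5 ≤ A ^ 5 :=
    h5 ▸ sum_pow_le_pow_of_sum_pow_eq univ (by norm_num) (by norm_num) hx' hA.le h3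
  have hAB : A ^ 15 ≤ (k : ℝ) ^ 2 * B ^ 15 := by
    simpa [h3, h5, ← pow_mul] using
      pow_sum_pow_le_card_pow_mul_pow_sum_pow univ (m := 3) (n := 5) (by norm_num) (by norm_num) hx'
  constructor
  · simpa using one_div_rpow_le_div_of_pow_le_mul_pow hA hB.le k.cast_nonneg (by norm_num) hAB
  · exact (div_le_one hA).mpr ((pow_le_pow_iff_left₀ hB.le hA.le (by norm_num)).mp hBA)

theorem power_sum_ratio_bounds (A B : ℝ) (k : ℕ) (hA : 0 < A) (hB : 0 < B)
    (hk : 0 < k) (x : Fin k → ℝ) (hx : ∀ i, 0 ≤ x i)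
    (h3 : ∑ i, x i ^ 3 = A ^ 3) (h5 : ∑ i, x i ^ 5 = B ^ 5) :
    ((1 : ℝ) / k) ^ ((2 : ℝ) / 15) ≤ B / A ∧ B / A ≤ 1 :=
  power_sum_ratio_bounds_general A B k hA hB x hx h3 h5
end

section
/- Suppose A, B > 0 with (1/2)^{2/15} < B/A < 1. Then the system y₁³ + y₂³ = A³, y₁⁵ + y₂⁵ = B⁵ has exactly two solutions in the closed first quadrant, of the form (α, β) and (β, α) with 0 < α < β. -/
/-!
Both equations are homogeneous, so on the cone `0 ≤ y ≤ x` a solution of `x³ + y³ = a`,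
`x⁵ + y⁵ = b` has ratio `t = y / x` with `g t = b³ / a⁵`, where `g t = (1 + t⁵)³ / (1 + t³)⁵`
(`powerSumRatio`). Since `g` decreases strictly from `g 0 = 1` to `g 1 = 1/4` on `[0, 1]`, the ratio
is determined by `(a, b)`, and then so is `x` through `x³ (1 + t³) = a`. For `a = A³`, `b = B⁵` the
value `(B / A)¹⁵` lies strictly between `1/4` and `1`, so the intermediate value theorem supplies a
ratio `θ ∈ (0, 1)` and hence one solution with `0 < y < x`; its reflection is the other.
-/

open Set

noncomputable def powerSumRatio (t : ℝ) : ℝ := (1 + t ^ 5) ^ 3 / (1 + t ^ 3) ^ 5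

lemma powerSumRatio_div {x : ℝ} (hx : x ≠ 0) (y : ℝ) :
    powerSumRatio (y / x) = (x ^ 5 + y ^ 5) ^ 3 / (x ^ 3 + y ^ 3) ^ 5 := by
  rw [powerSumRatio, div_pow, div_pow, one_add_div (pow_ne_zero _ hx),
    one_add_div (pow_ne_zero _ hx), div_pow, div_pow, show (x ^ 5) ^ 3 = (x ^ 3) ^ 5 by ring,
    div_div_div_cancel_right₀ (by positivity)]

lemma hasDerivAt_powerSumRatio {t : ℝ} (ht : 1 + t ^ 3 ≠ 0) :
    HasDerivAt powerSumRatio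
      (15 * t ^ 2 * (1 + t ^ 5) ^ 2 * (t ^ 2 - 1) / (1 + t ^ 3) ^ 6) t := by
  have hnum := ((hasDerivAt_pow 5 t).const_add 1).fun_pow 3
  have hden := ((hasDerivAt_pow 3 t).const_add 1).fun_pow 5
  refine (hnum.fun_div hden (pow_ne_zero 5 ht)).congr_deriv ?_
  rw [div_eq_div_iff (by positivity) (by positivity)]
  push_cast
  ring

lemma continuousOn_powerSumRatio : ContinuousOn powerSumRatio (Ici 0) :=
  ContinuousOn.div (by fun_prop) (by fun_prop) fun t (ht : 0 ≤ t) => by positivity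

lemma strictAntiOn_powerSumRatio : StrictAntiOn powerSumRatio (Icc 0 1) := by
  refine strictAntiOn_of_deriv_neg (convex_Icc 0 1)
    (continuousOn_powerSumRatio.mono Icc_subset_Ici_self) fun t ht => ?_
  rw [interior_Icc] at ht
  obtain ⟨ht0, ht1⟩ := ht
  rw [(hasDerivAt_powerSumRatio (by positivity)).deriv]
  have hneg : t ^ 2 - 1 < 0 := by nlinarith
  exact div_neg_of_neg_of_pos (mul_neg_of_pos_of_neg (by positivity) hneg) (by positivity)

lemma exists_powerSumRatio_eq {c : ℝ} (hc₁ : 1 / 4 < c) (hc₂ : c < 1) :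
    ∃ θ ∈ Ioo 0 1, powerSumRatio θ = c := by
  have h0 : powerSumRatio 0 = 1 := by norm_num [powerSumRatio]
  have h1 : powerSumRatio 1 = 1 / 4 := by norm_num [powerSumRatio]
  obtain ⟨θ, hθ, rfl⟩ := intermediate_value_Ioo' zero_le_one
    (continuousOn_powerSumRatio.mono Icc_subset_Ici_self) (by rw [h0, h1]; exact ⟨hc₁, hc₂⟩)
  exact ⟨θ, hθ, rfl⟩

lemma injOn_sum_pow_three_five :
    InjOn (fun p : ℝ × ℝ => (p.1 ^ 3 + p.2 ^ 3, p.1 ^ 5 + p.2 ^ 5)) {p | 0 ≤ p.2 ∧ p.2 ≤ p.1} := by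
  rintro ⟨x, y⟩ ⟨hy, hyx⟩ ⟨x', y'⟩ ⟨hy', hyx'⟩ h
  simp only [Prod.mk.injEq] at h ⊢
  obtain ⟨h3, h5⟩ := h
  have pos_iff : ∀ {a b : ℝ}, 0 ≤ b → b ≤ a → (0 < a ↔ 0 < a ^ 3 + b ^ 3) := fun hb hba =>
    ⟨fun ha => by positivity, fun h => by
      contrapose! h
      simp [le_antisymm h (hb.trans hba), le_antisymm (hba.trans h) hb]⟩
  have hpos : 0 < x ↔ 0 < x' := by rw [pos_iff hy hyx, h3, ← pos_iff hy' hyx']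
  obtain hx | hx := le_or_gt x 0
  · have hx' : x' ≤ 0 := not_lt.1 (hpos.not.1 hx.not_gt)
    constructor <;> linarith
  have hx' : 0 < x' := hpos.1 hx
  have hratio : y / x = y' / x' := by
    refine strictAntiOn_powerSumRatio.injOn ⟨div_nonneg hy hx.le, div_le_one_of_le₀ hyx hx.le⟩
      ⟨div_nonneg hy' hx'.le, div_le_one_of_le₀ hyx' hx'.le⟩ ?_
    rw [powerSumRatio_div hx.ne', powerSumRatio_div hx'.ne', h3, h5]
  have hcube : ∀ {a : ℝ}, 0 < a → ∀ b, a ^ 3 + b ^ 3 = a ^ 3 * (1 + (b / a) ^ 3) := fun ha b => by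
    field_simp
  have hxx' : x = x' := by
    refine (Odd.pow_inj (by decide : Odd 3)).1 <|
      mul_right_cancel₀ (by positivity : 1 + (y / x) ^ 3 ≠ 0) ?_
    rw [← hcube hx, h3, hcube hx', hratio]
  subst hxx'
  exact ⟨rfl, (div_left_inj' hx.ne').1 hratio⟩

lemma exists_sum_pow_three_five_eq {A B : ℝ} (hA : 0 < A) (h₁ : 1 / 4 < (B / A) ^ 15)
    (h₂ : (B / A) ^ 15 < 1) :
    ∃ x y : ℝ, 0 < y ∧ y < x ∧ x ^ 3 + y ^ 3 = A ^ 3 ∧ x ^ 5 + y ^ 5 = B ^ 5 := by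
  obtain ⟨θ, ⟨hθ0, hθ1⟩, hθ⟩ := exists_powerSumRatio_eq h₁ h₂
  set x := A / (1 + θ ^ 3) ^ ((3 : ℕ)⁻¹ : ℝ)
  have hx : 0 < x := by positivity
  have e3 : x ^ 3 + (θ * x) ^ 3 = A ^ 3 := by
    have hx3 : x ^ 3 = A ^ 3 / (1 + θ ^ 3) := by
      rw [div_pow, Real.rpow_inv_natCast_pow (by positivity) three_ne_zero]
    rw [mul_pow, hx3]
    field_simp
  refine ⟨x, θ * x, by positivity, by nlinarith, e3, ?_⟩
  have key := powerSumRatio_div hx.ne' (θ * x)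
  rw [mul_div_cancel_right₀ _ hx.ne', hθ, e3, div_pow, ← pow_mul,
    div_left_inj' (by positivity)] at key
  refine (Odd.pow_inj (by decide : Odd 3)).1 ?_
  rw [← pow_mul]
  exact key.symm

theorem system_solutions_intermediate_ratio_general (A B : ℝ) (hA : 0 < A)
    (h1 : ((1 : ℝ) / 2) ^ ((2 : ℝ) / 15) < B / A) (h2 : B / A < 1) :
    ∃ α β : ℝ, 0 < α ∧ α < β ∧
      ∀ y₁ y₂ : ℝ, 0 ≤ y₁ → 0 ≤ y₂ →
        ((y₁ ^ 3 + y₂ ^ 3 = A ^ 3 ∧ y₁ ^ 5 + y₂ ^ 5 = B ^ 5) ↔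
          ((y₁ = α ∧ y₂ = β) ∨ (y₁ = β ∧ y₂ = α))) := by
  have hBA : 0 < B / A := lt_trans (by positivity) h1
  have hquarter : 1 / 4 < (B / A) ^ 15 :=
    calc (1 / 4 : ℝ) = ((1 / 2 : ℝ) ^ ((2 : ℝ) / 15)) ^ 15 := by
          rw [← Real.rpow_mul_natCast (by norm_num)]; norm_num
      _ < (B / A) ^ 15 := by gcongr
  obtain ⟨β, α, hα, hαβ, e3, e5⟩ :=
    exists_sum_pow_three_five_eq hA hquarter (pow_lt_one₀ hBA.le h2 (by norm_num))
  have unique : ∀ {x y}, 0 ≤ y → y ≤ x → x ^ 3 + y ^ 3 = A ^ 3 → x ^ 5 + y ^ 5 = B ^ 5 →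
      x = β ∧ y = α := fun {x y} hy hyx h3 h5 =>
    Prod.ext_iff.1 <| @injOn_sum_pow_three_five (x, y) ⟨hy, hyx⟩ (β, α) ⟨hα.le, hαβ.le⟩
      (by simp only [h3, h5, e3, e5])
  refine ⟨α, β, hα, hαβ, fun y₁ y₂ hy₁ hy₂ => ⟨fun ⟨h3, h5⟩ => ?_, ?_⟩⟩
  · rcases le_total y₂ y₁ with h | h
    · exact Or.inr (unique hy₂ h h3 h5)
    · exact Or.inl (unique hy₁ h (by linarith) (by linarith)).symm
  · rintro (⟨rfl, rfl⟩ | ⟨rfl, rfl⟩) <;> constructor <;> linarith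

theorem system_solutions_intermediate_ratio (A B : ℝ) (hA : 0 < A) (hB : 0 < B)
    (h1 : ((1 : ℝ) / 2) ^ ((2 : ℝ) / 15) < B / A) (h2 : B / A < 1) :
    ∃ α β : ℝ, 0 < α ∧ α < β ∧
      ∀ y₁ y₂ : ℝ, 0 ≤ y₁ → 0 ≤ y₂ →
        ((y₁ ^ 3 + y₂ ^ 3 = A ^ 3 ∧ y₁ ^ 5 + y₂ ^ 5 = B ^ 5) ↔
          ((y₁ = α ∧ y₂ = β) ∨ (y₁ = β ∧ y₂ = α))) :=
  system_solutions_intermediate_ratio_general A B hA h1 h2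
end

section
/- Suppose A, B > 0 with B/A = (1/2)^{2/15}. Then the system y₁³ + y₂³ = A³, y₁⁵ + y₂⁵ = B⁵ has exactly one solution in the closed first quadrant, namely y₁ = y₂ = A/2^{1/3}. -/
lemma cube_inj_aux {a b : ℝ} (ha : 0 ≤ a) (hb : 0 ≤ b) (h : a ^ 3 = b ^ 3) : a = b := by
  rcases lt_trichotomy a b with hlt | he | hgt
  · exact absurd h (pow_lt_pow_left₀ hlt ha (by norm_num)).ne
  · exact he
  · exact absurd h.symm (pow_lt_pow_left₀ hgt hb (by norm_num)).ne

theorem system_solutions_critical_ratio (A B : ℝ) (hA : 0 < A) (hB : 0 < B)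
    (hr : B / A = ((1 : ℝ) / 2) ^ ((2 : ℝ) / 15)) :
    ∀ y₁ y₂ : ℝ, 0 ≤ y₁ → 0 ≤ y₂ →
      ((y₁ ^ 3 + y₂ ^ 3 = A ^ 3 ∧ y₁ ^ 5 + y₂ ^ 5 = B ^ 5) ↔
        (y₁ = A / (2 : ℝ) ^ ((1 : ℝ) / 3) ∧ y₂ = A / (2 : ℝ) ^ ((1 : ℝ) / 3))) := by
  have hc3 : ((2 : ℝ) ^ ((1 : ℝ) / 3)) ^ (3 : ℕ) = 2 := by
    rw [← Real.rpow_natCast ((2:ℝ) ^ ((1:ℝ)/3)) 3, ← Real.rpow_mul (by norm_num)]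
    norm_num
  have hcpos : (0:ℝ) < (2 : ℝ) ^ ((1 : ℝ) / 3) := Real.rpow_pos_of_pos (by norm_num) _
  have hB' : B = A * ((1:ℝ)/2) ^ ((2:ℝ)/15) := by
    field_simp at hr; linarith
  have hB15 : 4 * B ^ (15:ℕ) = A ^ 15 := by
    rw [hB', mul_pow, ← Real.rpow_natCast (((1:ℝ)/2) ^ ((2:ℝ)/15)) 15,
      ← Real.rpow_mul (by norm_num)]
    have : (2:ℝ)/15 * (15:ℕ) = ((2:ℕ):ℝ) := by norm_num
    rw [this, Real.rpow_natCast]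
    ring
  have hc15 : ((2 : ℝ) ^ ((1 : ℝ) / 3)) ^ (15:ℕ) = 32 := by
    rw [show (15:ℕ) = 3 * 5 from rfl, pow_mul, hc3]; norm_num
  have hB5 : B ^ (5:ℕ) = 2 * (A / (2 : ℝ) ^ ((1 : ℝ) / 3)) ^ 5 := by
    have h15 : (B ^ (5:ℕ)) ^ (3:ℕ) = (2 * (A / (2 : ℝ) ^ ((1 : ℝ) / 3)) ^ 5) ^ (3:ℕ) := by
      have e1 : (2 * (A / (2 : ℝ) ^ ((1 : ℝ) / 3)) ^ 5) ^ (3:ℕ)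
          = 8 * (A / (2 : ℝ) ^ ((1 : ℝ) / 3)) ^ (15:ℕ) := by ring
      have e2 : (A / (2 : ℝ) ^ ((1 : ℝ) / 3)) ^ (15:ℕ) = A ^ 15 / 32 := by
        rw [div_pow, hc15]
      have e3 : (B ^ (5:ℕ)) ^ (3:ℕ) = B ^ (15:ℕ) := by ring
      rw [e1, e2, e3]; linarith
    exact cube_inj_aux (by positivity) (by positivity) h15
  intro y₁ y₂ h1 h2
  constructor
  · rintro ⟨h3, h5⟩
    have hkey : 4 * (y₁^5 + y₂^5) ^ 3 = (y₁^3 + y₂^3) ^ 5 := by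
      rw [h3, h5]
      calc 4 * (B^5)^3 = 4 * B ^ (15:ℕ) := by ring
        _ = A ^ 15 := hB15
        _ = (A^3)^5 := by ring
    have heq : y₁ = y₂ := by
      by_contra hne
      have hs : 0 < (y₁ - y₂) ^ 2 := pow_two_pos_of_ne_zero (sub_ne_zero.mpr hne)
      have hQ : 0 < 3*y₁^13 + 6*y₁^12*y₂ + 9*y₁^11*y₂^2 + 7*y₁^10*y₂^3 + 5*y₁^9*y₂^4
          + 15*y₁^8*y₂^5 + 15*y₁^7*y₂^6 + 15*y₁^6*y₂^7 + 15*y₁^5*y₂^8 + 5*y₁^4*y₂^9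
          + 7*y₁^3*y₂^10 + 9*y₁^2*y₂^11 + 6*y₁*y₂^12 + 3*y₂^13 := by
        rcases h1.lt_or_eq with hx | hx
        · have t1 : 0 < 3*y₁^13 := by positivity
          have t2 : 0 ≤ 6*y₁^12*y₂ + 9*y₁^11*y₂^2 + 7*y₁^10*y₂^3 + 5*y₁^9*y₂^4
              + 15*y₁^8*y₂^5 + 15*y₁^7*y₂^6 + 15*y₁^6*y₂^7 + 15*y₁^5*y₂^8 + 5*y₁^4*y₂^9
              + 7*y₁^3*y₂^10 + 9*y₁^2*y₂^11 + 6*y₁*y₂^12 + 3*y₂^13 := by positivity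
          linarith
        · have hy : 0 < y₂ := by
            rcases h2.lt_or_eq with hy | hy
            · exact hy
            · exact absurd (hx.symm.trans hy) hne
          have t1 : 0 < 3*y₂^13 := by positivity
          have t2 : 0 ≤ 3*y₁^13 + 6*y₁^12*y₂ + 9*y₁^11*y₂^2 + 7*y₁^10*y₂^3 + 5*y₁^9*y₂^4
              + 15*y₁^8*y₂^5 + 15*y₁^7*y₂^6 + 15*y₁^6*y₂^7 + 15*y₁^5*y₂^8 + 5*y₁^4*y₂^9
              + 7*y₁^3*y₂^10 + 9*y₁^2*y₂^11 + 6*y₁*y₂^12 := by positivity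
          linarith
      have hzero : (y₁ - y₂) ^ 2 * (3*y₁^13 + 6*y₁^12*y₂ + 9*y₁^11*y₂^2 + 7*y₁^10*y₂^3
          + 5*y₁^9*y₂^4 + 15*y₁^8*y₂^5 + 15*y₁^7*y₂^6 + 15*y₁^6*y₂^7 + 15*y₁^5*y₂^8
          + 5*y₁^4*y₂^9 + 7*y₁^3*y₂^10 + 9*y₁^2*y₂^11 + 6*y₁*y₂^12 + 3*y₂^13) = 0 := by
        linear_combination hkey
      nlinarith [mul_pos hs hQ]
    subst heq
    have hy3 : y₁ ^ 3 = (A / (2 : ℝ) ^ ((1 : ℝ) / 3)) ^ 3 := by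
      rw [div_pow, hc3]; linarith
    have : y₁ = A / (2 : ℝ) ^ ((1 : ℝ) / 3) :=
      cube_inj_aux h1 (by positivity) hy3
    exact ⟨this, this⟩
  · rintro ⟨rfl, rfl⟩
    constructor
    · rw [div_pow, hc3]; ring
    · rw [hB5]; ring
end

section
/- Suppose A, B > 0 with B/A = (1/3)^{2/15}. Then the system 2y₁³ + y₂³ = A³, 2y₁⁵ + y₂⁵ = B⁵ has exactly one solution with y₁, y₂ ≥ 0, namely y₁ = y₂ = A/3^{1/3}. -/
/-!
With `c = A / 3^{1/3}` we have `A³ = 3c³`, and the ratio condition says that `B⁵ = 3c⁵`.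
The quintic `3y⁵ - 5c²y³ + 2c⁵` has a double root at `y = c` and is positive at every other
`y ≥ 0`. Its weighted sum over a solution with the weights `2, 1` is
`3B⁵ - 5c²A³ + 6c⁵ = 0`, which forces `y₁ = y₂ = c`.
-/

open Finset

theorem quintic_tangent_eq (y c : ℝ) :
    3 * y ^ 5 - 5 * c ^ 2 * y ^ 3 + 2 * c ^ 5 =
      (y - c) ^ 2 * (3 * y ^ 3 + 6 * c * y ^ 2 + 4 * c ^ 2 * y + 2 * c ^ 3) := by
  ring

theorem quintic_tangent_nonneg {y c : ℝ} (hy : 0 ≤ y) (hc : 0 ≤ c) :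
    0 ≤ 3 * y ^ 5 - 5 * c ^ 2 * y ^ 3 + 2 * c ^ 5 := by
  rw [quintic_tangent_eq]
  positivity

theorem eq_of_quintic_tangent_eq_zero {y c : ℝ} (hy : 0 ≤ y) (hc : 0 ≤ c)
    (h : 3 * y ^ 5 - 5 * c ^ 2 * y ^ 3 + 2 * c ^ 5 = 0) : y = c := by
  rw [quintic_tangent_eq] at h
  rcases mul_eq_zero.mp h with h | h
  · exact sub_eq_zero.mp (pow_eq_zero_iff two_ne_zero |>.mp h)
  · obtain ⟨hy3, hc3⟩ : y ^ 3 = 0 ∧ c ^ 3 = 0 := by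
      constructor <;> linarith [pow_nonneg hy 3, pow_nonneg hc 3, mul_nonneg hc (sq_nonneg y),
        mul_nonneg (sq_nonneg c) hy]
    rw [pow_eq_zero_iff three_ne_zero |>.mp hy3, pow_eq_zero_iff three_ne_zero |>.mp hc3]

theorem eq_of_sum_pow_three_eq_of_sum_pow_five_eq {ι : Type*} (s : Finset ι) (w y : ι → ℝ)
    {c : ℝ} (hw : ∀ i ∈ s, 0 < w i) (hy : ∀ i ∈ s, 0 ≤ y i) (hc : 0 ≤ c)
    (h3 : ∑ i ∈ s, w i * y i ^ 3 = (∑ i ∈ s, w i) * c ^ 3)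
    (h5 : ∑ i ∈ s, w i * y i ^ 5 = (∑ i ∈ s, w i) * c ^ 5) :
    ∀ i ∈ s, y i = c := by
  have hsum : ∑ i ∈ s, w i * (3 * y i ^ 5 - 5 * c ^ 2 * y i ^ 3 + 2 * c ^ 5) =
      3 * ∑ i ∈ s, w i * y i ^ 5 - 5 * c ^ 2 * ∑ i ∈ s, w i * y i ^ 3 +
        2 * c ^ 5 * ∑ i ∈ s, w i := by
    rw [mul_sum, mul_sum, mul_sum, ← sum_sub_distrib, ← sum_add_distrib]
    exact sum_congr rfl fun i _ => by ring
  rw [h3, h5] at hsum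
  have hzero := (sum_eq_zero_iff_of_nonneg fun i hi =>
    mul_nonneg (hw i hi).le (quintic_tangent_nonneg (hy i hi) hc)).mp (by rw [hsum]; ring)
  intro i hi
  exact eq_of_quintic_tangent_eq_zero (hy i hi) hc
    ((mul_eq_zero.mp (hzero i hi)).resolve_left (hw i hi).ne')

theorem pow_three_eq_mul_div_cbrt_pow_three {s : ℝ} (hs : 0 < s) (A : ℝ) :
    A ^ 3 = s * (A / s ^ ((1 : ℝ) / 3)) ^ 3 := by
  have hcube : (s ^ ((1 : ℝ) / 3)) ^ 3 = s := by
    simpa [one_div] using Real.rpow_inv_natCast_pow hs.le three_ne_zero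
  rw [div_pow, hcube]
  field_simp

theorem pow_five_eq_mul_div_cbrt_pow_five {s A B : ℝ} (hs : 0 < s) (hA : A ≠ 0)
    (hr : B / A = (1 / s) ^ ((2 : ℝ) / 15)) :
    B ^ 5 = s * (A / s ^ ((1 : ℝ) / 3)) ^ 5 := by
  have hr5 : ((1 / s) ^ ((2 : ℝ) / 15)) ^ 5 = s ^ (-(2 / 3 : ℝ)) := by
    rw [← Real.rpow_natCast, ← Real.rpow_mul (by positivity), one_div, Real.inv_rpow hs.le,
      ← Real.rpow_neg hs.le]
    norm_num
  have hu5 : (s ^ ((1 : ℝ) / 3)) ^ 5 = s ^ ((5 : ℝ) / 3) := by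
    rw [← Real.rpow_natCast, ← Real.rpow_mul hs.le]
    norm_num
  have hexp : s ^ (-(2 / 3 : ℝ)) * s ^ ((5 : ℝ) / 3) = s := by
    rw [← Real.rpow_add hs]
    norm_num
  rw [← div_mul_cancel₀ B hA, hr, mul_pow, hr5, div_pow, hu5]
  field_simp
  exact hexp

theorem system2_solutions_critical_ratio_general (A B : ℝ) (hA : 0 < A)
    (hr : B / A = ((1 : ℝ) / 3) ^ ((2 : ℝ) / 15)) :
    ∀ y₁ y₂ : ℝ, 0 ≤ y₁ → 0 ≤ y₂ →
      ((2 * y₁ ^ 3 + y₂ ^ 3 = A ^ 3 ∧ 2 * y₁ ^ 5 + y₂ ^ 5 = B ^ 5) ↔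
        (y₁ = A / (3 : ℝ) ^ ((1 : ℝ) / 3) ∧ y₂ = A / (3 : ℝ) ^ ((1 : ℝ) / 3))) := by
  intro y₁ y₂ hy₁ hy₂
  rw [pow_three_eq_mul_div_cbrt_pow_three (by norm_num : (0 : ℝ) < 3) A,
    pow_five_eq_mul_div_cbrt_pow_five (by norm_num) hA.ne' hr]
  set c := A / (3 : ℝ) ^ ((1 : ℝ) / 3)
  constructor
  · rintro ⟨h3, h5⟩
    have hy : ∀ i ∈ univ, ![y₁, y₂] i = c :=
      eq_of_sum_pow_three_eq_of_sum_pow_five_eq univ ![2, 1] ![y₁, y₂]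
        (by simp [Fin.forall_fin_two]) (by simp [Fin.forall_fin_two, hy₁, hy₂]) (by positivity)
        (by
          simp only [Fin.sum_univ_two, Matrix.cons_val_zero, Matrix.cons_val_one]
          linear_combination h3)
        (by
          simp only [Fin.sum_univ_two, Matrix.cons_val_zero, Matrix.cons_val_one]
          linear_combination h5)
    exact ⟨hy 0 (mem_univ _), hy 1 (mem_univ _)⟩
  · rintro ⟨rfl, rfl⟩
    constructor <;> ring

theorem system2_solutions_critical_ratio (A B : ℝ) (hA : 0 < A) (hB : 0 < B)
    (hr : B / A = ((1 : ℝ) / 3) ^ ((2 : ℝ) / 15)) :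
    ∀ y₁ y₂ : ℝ, 0 ≤ y₁ → 0 ≤ y₂ →
      ((2 * y₁ ^ 3 + y₂ ^ 3 = A ^ 3 ∧ 2 * y₁ ^ 5 + y₂ ^ 5 = B ^ 5) ↔
        (y₁ = A / (3 : ℝ) ^ ((1 : ℝ) / 3) ∧ y₂ = A / (3 : ℝ) ^ ((1 : ℝ) / 3))) :=
  system2_solutions_critical_ratio_general A B hA hr
end

section
/- Suppose y₁ ≥ y₂ ≥ 0, z₁ ≥ z₂ ≥ 0, z₁³ + z₂³ ≤ y₁³ + y₂³, z₁⁵ + z₂⁵ ≥ y₁⁵ + y₂⁵, and z₁⁷ + z₂⁷ = y₁⁷ + y₂⁷. Then z₁ = y₁, z₂ = y₂, and equality holds in both of the first two inequalities. -/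
private lemma cross_lemma (a b c d : ℝ) (h1 : c < a) (h2 : d ≤ c) (h3 : b < d) (h4 : 0 ≤ b) :
    (a^7-c^7)*(d^3-b^3) > (a^3-c^3)*(d^7-b^7) := by
  have hd : 0 < d := lt_of_le_of_lt h4 h3
  have hc : 0 < c := lt_of_lt_of_le hd h2
  have ha : 0 < a := lt_trans hc h1
  have L1 : 3*(a^6+a^5*c+a^4*c^2+a^3*c^3+a^2*c^4+a*c^5+c^6) > 7*c^4*(a^2+a*c+c^2) := by
    nlinarith [sq_nonneg (a-c), sq_nonneg (a+c), mul_pos hc hc, sq_nonneg (a^2-c^2), sq_nonneg (a^3-c^3), mul_pos (sub_pos.2 h1) hc, sq_nonneg (a*(a-c)), sq_nonneg (c*(a-c)), pow_pos hc 4]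
  have L2 : 7*d^4*(d^2+d*b+b^2) ≥ 3*(d^6+d^5*b+d^4*b^2+d^3*b^3+d^2*b^4+d*b^5+b^6) := by
    nlinarith [sq_nonneg (d-b), mul_nonneg h4 (le_trans h4 h3.le), sq_nonneg (d^2-b^2), sq_nonneg (d*b), mul_nonneg (sub_nonneg.2 h3.le) h4, pow_nonneg h4 4, pow_nonneg (le_trans h4 h3.le) 4]
  have hS2ac : (0:ℝ) < a^2+a*c+c^2 := by positivity
  have hS2db : (0:ℝ) < d^2+d*b+b^2 := by nlinarith [mul_nonneg hd.le h4, sq_nonneg b, pow_pos hd 2]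
  have hc4d4 : c^4 ≥ d^4 := by nlinarith [pow_le_pow_left₀ hd.le h2 4]
  have key : (a^6+a^5*c+a^4*c^2+a^3*c^3+a^2*c^4+a*c^5+c^6)*(d^2+d*b+b^2) >
      (a^2+a*c+c^2)*(d^6+d^5*b+d^4*b^2+d^3*b^3+d^2*b^4+d*b^5+b^6) := by
    have step1 : 3*(a^6+a^5*c+a^4*c^2+a^3*c^3+a^2*c^4+a*c^5+c^6) > 7*d^4*(a^2+a*c+c^2) := by
      nlinarith [mul_le_mul_of_nonneg_right hc4d4 hS2ac.le]
    have step2 : (a^2+a*c+c^2)*(d^6+d^5*b+d^4*b^2+d^3*b^3+d^2*b^4+d*b^5+b^6)*3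
        < 3*(a^6+a^5*c+a^4*c^2+a^3*c^3+a^2*c^4+a*c^5+c^6)*(d^2+d*b+b^2) := by
      calc (a^2+a*c+c^2)*(d^6+d^5*b+d^4*b^2+d^3*b^3+d^2*b^4+d*b^5+b^6)*3
          ≤ 7*d^4*(a^2+a*c+c^2)*(d^2+d*b+b^2) := by
            nlinarith [mul_le_mul_of_nonneg_left L2 hS2ac.le]
        _ < 3*(a^6+a^5*c+a^4*c^2+a^3*c^3+a^2*c^4+a*c^5+c^6)*(d^2+d*b+b^2) :=
            mul_lt_mul_of_pos_right step1 hS2db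
    linarith
  have e1 : a^7-c^7 = (a-c)*(a^6+a^5*c+a^4*c^2+a^3*c^3+a^2*c^4+a*c^5+c^6) := by ring
  have e2 : a^3-c^3 = (a-c)*(a^2+a*c+c^2) := by ring
  have e3 : d^7-b^7 = (d-b)*(d^6+d^5*b+d^4*b^2+d^3*b^3+d^2*b^4+d*b^5+b^6) := by ring
  have e4 : d^3-b^3 = (d-b)*(d^2+d*b+b^2) := by ring
  rw [e1, e2, e3, e4]
  have hac : 0 < a - c := sub_pos.2 h1
  have hdb : 0 < d - b := sub_pos.2 h3
  calc (a-c)*(a^2+a*c+c^2)*((d-b)*(d^6+d^5*b+d^4*b^2+d^3*b^3+d^2*b^4+d*b^5+b^6))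
      = ((a-c)*(d-b))*((a^2+a*c+c^2)*(d^6+d^5*b+d^4*b^2+d^3*b^3+d^2*b^4+d*b^5+b^6)) := by ring
    _ < ((a-c)*(d-b))*((a^6+a^5*c+a^4*c^2+a^3*c^3+a^2*c^4+a*c^5+c^6)*(d^2+d*b+b^2)) :=
        mul_lt_mul_of_pos_left key (mul_pos hac hdb)
    _ = (a-c)*(a^6+a^5*c+a^4*c^2+a^3*c^3+a^2*c^4+a*c^5+c^6)*((d-b)*(d^2+d*b+b^2)) := by ring

theorem seventh_power_equality_case (y₁ y₂ z₁ z₂ : ℝ)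
    (hy : y₁ ≥ y₂) (hy2 : y₂ ≥ 0) (hz : z₁ ≥ z₂) (hz2 : z₂ ≥ 0)
    (h3 : z₁ ^ 3 + z₂ ^ 3 ≤ y₁ ^ 3 + y₂ ^ 3)
    (h5 : z₁ ^ 5 + z₂ ^ 5 ≥ y₁ ^ 5 + y₂ ^ 5)
    (h7 : z₁ ^ 7 + z₂ ^ 7 = y₁ ^ 7 + y₂ ^ 7) :
    z₁ = y₁ ∧ z₂ = y₂ ∧ z₁ ^ 3 + z₂ ^ 3 = y₁ ^ 3 + y₂ ^ 3 ∧
      z₁ ^ 5 + z₂ ^ 5 = y₁ ^ 5 + y₂ ^ 5 := by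
  have hy1 : (0:ℝ) ≤ y₁ := le_trans hy2 hy
  have hz1nn : (0:ℝ) ≤ z₁ := le_trans hz2 hz
  have hz1 : z₁ = y₁ := by
    rcases lt_trichotomy z₁ y₁ with hlt | heq | hgt
    · exfalso
      have h7z : z₁^7 < y₁^7 := pow_lt_pow_left₀ hlt hz1nn (by norm_num)
      have hz2y2 : y₂ < z₂ := by
        by_contra hle
        push_neg at hle
        have : z₂^7 ≤ y₂^7 := pow_le_pow_left₀ hz2 hle 7
        linarith
      have hcl := cross_lemma y₁ y₂ z₁ z₂ hlt hz hz2y2 hy2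
      have hMpos : 0 < y₁^7 - z₁^7 := by linarith
      have h3' : z₂^3 - y₂^3 ≤ y₁^3 - z₁^3 := by linarith
      rw [show z₂^7 - y₂^7 = y₁^7 - z₁^7 from by linarith] at hcl
      have := mul_le_mul_of_nonneg_left h3' hMpos.le
      nlinarith [this, hcl]
    · exact heq
    · exfalso
      have h7z : y₁^7 < z₁^7 := pow_lt_pow_left₀ hgt hy1 (by norm_num)
      have hz2y2 : z₂ < y₂ := by
        by_contra hle
        push_neg at hle
        have : y₂^7 ≤ z₂^7 := pow_le_pow_left₀ hy2 hle 7
        linarith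
      have hA : 0 ≤ (y₁^2+y₂^2) * ((z₁^5+z₂^5) - (y₁^5+y₂^5)) :=
        mul_nonneg (by positivity) (by linarith)
      have hB : 0 ≤ (y₁^2*y₂^2) * ((y₁^3+y₂^3) - (z₁^3+z₂^3)) :=
        mul_nonneg (by positivity) (by linarith)
      have hFsum : z₁^3*((z₁^2-y₁^2)*(z₁^2-y₂^2)) + z₂^3*((y₁^2-z₂^2)*(y₂^2-z₂^2)) ≤ 0 := by
        nlinarith [hA, hB]
      have hz1pos : 0 < z₁ := lt_of_le_of_lt hy1 hgt
      have hsq1 : y₁^2 < z₁^2 := by nlinarith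
      have hsq2 : y₂^2 < z₁^2 := by nlinarith
      have hsq3 : z₂^2 ≤ y₂^2 := by nlinarith
      have hsq4 : z₂^2 ≤ y₁^2 := by nlinarith
      have hF1 : 0 < z₁^3*((z₁^2-y₁^2)*(z₁^2-y₂^2)) :=
        mul_pos (pow_pos hz1pos 3) (mul_pos (by linarith) (by linarith))
      have hF2 : 0 ≤ z₂^3*((y₁^2-z₂^2)*(y₂^2-z₂^2)) :=
        mul_nonneg (pow_nonneg hz2 3) (mul_nonneg (by linarith) (by linarith))
      linarith
  have hz2e : z₂ = y₂ := by
    have h27 : z₂^7 = y₂^7 := by rw [hz1] at h7; linarith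
    rcases lt_trichotomy z₂ y₂ with hlt | heq | hgt
    · have := pow_lt_pow_left₀ hlt hz2 (7 : ℕ).succ_ne_zero; nlinarith [pow_lt_pow_left₀ hlt hz2 (by norm_num : (7:ℕ) ≠ 0)]
    · exact heq
    · nlinarith [pow_lt_pow_left₀ hgt hy2 (by norm_num : (7:ℕ) ≠ 0)]
  exact ⟨hz1, hz2e, by rw [hz1, hz2e], by rw [hz1, hz2e]⟩
end

section
/- The function k(t) = (1+t⁷)⁵/(1+t⁵)⁷ is strictly decreasing on [0,1] and strictly increasing on [1,∞). -/
/-! For `k(t) = (1 + t ^ p) ^ q / (1 + t ^ q) ^ p` (here `p = 7`, `q = 5`) the quotient rule gives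
`k'(t) = p q k(t) (t ^ p - t ^ q) / (t (1 + t ^ p) (1 + t ^ q))` for `t > 0`. When `0 < q < p` the
derivative thus has the sign of `t ^ p - t ^ q`: negative on `(0, 1)`, positive on `(1, ∞)`. -/

open Set

lemma natCast_mul_pow_sub_one {K : Type*} [Field K] {x : K} (hx : x ≠ 0) (n : ℕ) :
    (n : K) * x ^ (n - 1) = n * x ^ n / x := by
  rcases eq_or_ne n 0 with rfl | hn
  · simp
  · rw [eq_div_iff hx, mul_assoc, pow_sub_one_mul hn]

noncomputable def powRatio (p q : ℕ) (t : ℝ) : ℝ := (1 + t ^ p) ^ q / (1 + t ^ q) ^ p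

section powRatio

variable {p q : ℕ}

lemma powRatio_pos {t : ℝ} (ht : 0 ≤ t) : 0 < powRatio p q t := by
  unfold powRatio
  positivity

lemma continuousOn_powRatio : ContinuousOn (powRatio p q) (Ici 0) :=
  ContinuousOn.div (by fun_prop) (by fun_prop) fun t (ht : 0 ≤ t) => by positivity

lemma hasDerivAt_powRatio {t : ℝ} (ht : 0 < t) :
    HasDerivAt (powRatio p q)
      (p * q * powRatio p q t / (t * (1 + t ^ p) * (1 + t ^ q)) * (t ^ p - t ^ q)) t := by
  have hp : 1 + t ^ p ≠ 0 := by positivity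
  have hq : 1 + t ^ q ≠ 0 := by positivity
  have hnum := ((hasDerivAt_pow p t).const_add 1).fun_pow q
  have hden := ((hasDerivAt_pow q t).const_add 1).fun_pow p
  refine (hnum.fun_div hden (pow_ne_zero p hq)).congr_deriv ?_
  rw [powRatio, natCast_mul_pow_sub_one ht.ne', natCast_mul_pow_sub_one ht.ne',
    natCast_mul_pow_sub_one hp, natCast_mul_pow_sub_one hq]
  field_simp
  ring

lemma deriv_powRatio_factor_pos (hq : 0 < q) (hp : 0 < p) {t : ℝ} (ht : 0 < t) :
    0 < p * q * powRatio p q t / (t * (1 + t ^ p) * (1 + t ^ q)) := by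
  have := powRatio_pos (p := p) (q := q) ht.le
  have : (0 : ℝ) < p := Nat.cast_pos.mpr hp
  have : (0 : ℝ) < q := Nat.cast_pos.mpr hq
  positivity

theorem strictAntiOn_powRatio (hq : 0 < q) (hqp : q < p) :
    StrictAntiOn (powRatio p q) (Icc 0 1) := by
  refine strictAntiOn_of_deriv_neg (convex_Icc 0 1)
    (continuousOn_powRatio.mono Icc_subset_Ici_self) fun t ht => ?_
  rw [interior_Icc] at ht
  rw [(hasDerivAt_powRatio ht.1).deriv]
  exact mul_neg_of_pos_of_neg (deriv_powRatio_factor_pos hq (hq.trans hqp) ht.1)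
    (sub_neg.mpr (pow_lt_pow_right_of_lt_one₀ ht.1 ht.2 hqp))

theorem strictMonoOn_powRatio (hq : 0 < q) (hqp : q < p) :
    StrictMonoOn (powRatio p q) (Ici 1) := by
  refine strictMonoOn_of_deriv_pos (convex_Ici 1)
    (continuousOn_powRatio.mono (Ici_subset_Ici.mpr zero_le_one)) fun t ht => ?_
  rw [interior_Ici] at ht
  have ht0 : 0 < t := zero_lt_one.trans ht
  rw [(hasDerivAt_powRatio ht0).deriv]
  exact mul_pos (deriv_powRatio_factor_pos hq (hq.trans hqp) ht0)
    (sub_pos.mpr (pow_lt_pow_right₀ ht hqp))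

end powRatio

theorem k_monotonicity :
    let k : ℝ → ℝ := fun t => (1 + t ^ 7) ^ 5 / (1 + t ^ 5) ^ 7
    StrictAntiOn k (Set.Icc 0 1) ∧ StrictMonoOn k (Set.Ici 1) :=
  ⟨strictAntiOn_powRatio (by norm_num) (by norm_num),
    strictMonoOn_powRatio (by norm_num) (by norm_num)⟩
end

section
/- Suppose x₁ ≥ x₂ ≥ ⋯ ≥ x_n ≥ 0 with x₁ > 0, and for m ≤ n define A_m = (Σ_{i=1}^m x_i³)^{1/3} and B_m = (Σ_{i=1}^m x_i⁵)^{1/5}. Then for each m ∈ {2,…,n}, B_{m−1}/A_{m−1} ≥ B_m/A_m, with strict inequality if x_m > 0. -/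
private lemma rpow_combine {a b : ℝ} (ha : 0 < a) (hb : 0 < b) :
    a ^ ((1:ℝ)/5) / b ^ ((1:ℝ)/3) = (a ^ 3 / b ^ 5) ^ ((1:ℝ)/15) := by
  rw [Real.div_rpow (by positivity) (by positivity),
    ← Real.rpow_natCast a 3, ← Real.rpow_natCast b 5,
    ← Real.rpow_mul ha.le, ← Real.rpow_mul hb.le]
  norm_num

private lemma ratio_le {a b c d : ℝ} (ha : 0 < a) (hb : 0 < b) (hc : 0 < c) (hd : 0 < d)
    (h : a ^ 3 * d ^ 5 ≤ c ^ 3 * b ^ 5) :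
    a ^ ((1:ℝ)/5) / b ^ ((1:ℝ)/3) ≤ c ^ ((1:ℝ)/5) / d ^ ((1:ℝ)/3) := by
  rw [rpow_combine ha hb, rpow_combine hc hd]
  exact Real.rpow_le_rpow (by positivity) ((div_le_div_iff₀ (by positivity) (by positivity)).2 h)
    (by norm_num)

private lemma ratio_lt {a b c d : ℝ} (ha : 0 < a) (hb : 0 < b) (hc : 0 < c) (hd : 0 < d)
    (h : a ^ 3 * d ^ 5 < c ^ 3 * b ^ 5) :
    a ^ ((1:ℝ)/5) / b ^ ((1:ℝ)/3) < c ^ ((1:ℝ)/5) / d ^ ((1:ℝ)/3) := by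
  rw [rpow_combine ha hb, rpow_combine hc hd]
  exact Real.rpow_lt_rpow (by positivity) ((div_lt_div_iff₀ (by positivity) (by positivity)).2 h)
    (by norm_num)

theorem ratio_decreasing (n : ℕ) (x : ℕ → ℝ)
    (hmono : ∀ i j, i < n → j < n → i ≤ j → x j ≤ x i)
    (hnonneg : ∀ i, i < n → 0 ≤ x i) (hx1 : 0 < x 0)
    (A B : ℕ → ℝ)
    (hA : ∀ m, A m = (∑ i ∈ Finset.range m, x i ^ 3) ^ ((1 : ℝ) / 3))
    (hB : ∀ m, B m = (∑ i ∈ Finset.range m, x i ^ 5) ^ ((1 : ℝ) / 5)) :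
    ∀ m, 2 ≤ m → m ≤ n →
      (B m / A m ≤ B (m - 1) / A (m - 1)) ∧
      (0 < x (m - 1) → B m / A m < B (m - 1) / A (m - 1)) := by
  intro m hm2 hmn
  obtain ⟨k, rfl⟩ : ∃ k, m = k + 1 := ⟨m - 1, by omega⟩
  simp only [Nat.add_sub_cancel]
  set S : ℝ := ∑ i ∈ Finset.range k, x i ^ 3 with hS
  set T : ℝ := ∑ i ∈ Finset.range k, x i ^ 5 with hT
  set y : ℝ := x k with hy
  have hm1n : k < n := by omega
  have hylt : ∀ i, i < k → i < n := fun i hi => lt_trans hi hm1n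
  have hynn : 0 ≤ y := hnonneg _ hm1n
  have h0m : 0 < k := by omega
  have hSpos : 0 < S := by
    refine lt_of_lt_of_le (pow_pos hx1 3) ?_
    exact Finset.single_le_sum (f := fun i => x i ^ 3)
      (fun i hi => pow_nonneg (hnonneg i (hylt i (Finset.mem_range.1 hi))) 3) (Finset.mem_range.2 h0m)
  have hTpos : 0 < T := by
    refine lt_of_lt_of_le (pow_pos hx1 5) ?_
    exact Finset.single_le_sum (f := fun i => x i ^ 5)
      (fun i hi => pow_nonneg (hnonneg i (hylt i (Finset.mem_range.1 hi))) 5) (Finset.mem_range.2 h0m)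
  have hkey : y ^ 2 * S ≤ T := by
    rw [hS, hT, Finset.mul_sum]
    refine Finset.sum_le_sum fun i hi => ?_
    have hi' := Finset.mem_range.1 hi
    have hxi : y ≤ x i := hmono i k (hylt i hi') hm1n (by omega)
    have hxinn : 0 ≤ x i := hnonneg i (hylt i hi')
    calc y ^ 2 * x i ^ 3 ≤ x i ^ 2 * x i ^ 3 := by
          exact mul_le_mul_of_nonneg_right (pow_le_pow_left₀ hynn hxi 2) (by positivity)
      _ = x i ^ 5 := by ring
  have hchain : S * (T + y ^ 5) ≤ T * (S + y ^ 3) := by nlinarith [pow_nonneg hynn 3]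
  have hsum3 : ∑ i ∈ Finset.range (k+1), x i ^ 3 = S + y ^ 3 :=
    Finset.sum_range_succ (fun i => x i ^ 3) k
  have hsum5 : ∑ i ∈ Finset.range (k+1), x i ^ 5 = T + y ^ 5 :=
    Finset.sum_range_succ (fun i => x i ^ 5) k
  have hSy : 0 < S + y ^ 3 := by positivity
  have hTy : 0 < T + y ^ 5 := by positivity
  rw [hA, hA, hB, hB, hsum3, hsum5]
  have hcube : S ^ 3 * (T + y ^ 5) ^ 3 ≤ T ^ 3 * (S + y ^ 3) ^ 3 := by
    have := pow_le_pow_left₀ (by positivity) hchain 3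
    calc S ^ 3 * (T + y ^ 5) ^ 3 = (S * (T + y ^ 5)) ^ 3 := by ring
      _ ≤ (T * (S + y ^ 3)) ^ 3 := this
      _ = T ^ 3 * (S + y ^ 3) ^ 3 := by ring
  constructor
  · apply ratio_le hTy hSy hTpos hSpos
    have hS2 : S ^ 2 ≤ (S + y ^ 3) ^ 2 := pow_le_pow_left₀ hSpos.le (by nlinarith [pow_nonneg hynn 3]) 2
    calc (T + y ^ 5) ^ 3 * S ^ 5 = (S ^ 3 * (T + y ^ 5) ^ 3) * S ^ 2 := by ring
      _ ≤ (T ^ 3 * (S + y ^ 3) ^ 3) * S ^ 2 := mul_le_mul_of_nonneg_right hcube (by positivity)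
      _ ≤ (T ^ 3 * (S + y ^ 3) ^ 3) * (S + y ^ 3) ^ 2 := mul_le_mul_of_nonneg_left hS2 (by positivity)
      _ = T ^ 3 * (S + y ^ 3) ^ 5 := by ring
  · intro hypos
    apply ratio_lt hTy hSy hTpos hSpos
    have hS2 : S ^ 2 < (S + y ^ 3) ^ 2 := by nlinarith [pow_pos hypos 3]
    calc (T + y ^ 5) ^ 3 * S ^ 5 = (S ^ 3 * (T + y ^ 5) ^ 3) * S ^ 2 := by ring
      _ ≤ (T ^ 3 * (S + y ^ 3) ^ 3) * S ^ 2 := mul_le_mul_of_nonneg_right hcube (by positivity)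
      _ < (T ^ 3 * (S + y ^ 3) ^ 3) * (S + y ^ 3) ^ 2 := mul_lt_mul_of_pos_left hS2 (by positivity)
      _ = T ^ 3 * (S + y ^ 3) ^ 5 := by ring
end

section
/- Suppose y₁ ≥ y₂ ≥ 0 with y₁ > 0, n ≥ 2, and x₁ ≥ ⋯ ≥ x_n ≥ 0 satisfy Σ x_i³ ≤ y₁³ + y₂³ and Σ x_i⁵ ≥ y₁⁵ + y₂⁵. If y₂ = 0, then x₂ = 0 and x₁ = y₁. -/
theorem single_soliton_rigidity (y₁ y₂ : ℝ) (hy : y₁ ≥ y₂) (hy2 : y₂ ≥ 0)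
    (hy1 : 0 < y₁) (hy20 : y₂ = 0) (n : ℕ) (hn : 2 ≤ n) (x : ℕ → ℝ)
    (hmono : ∀ i j, i < n → j < n → i ≤ j → x j ≤ x i)
    (hnonneg : ∀ i, i < n → 0 ≤ x i)
    (h3 : ∑ i ∈ Finset.range n, x i ^ 3 ≤ y₁ ^ 3 + y₂ ^ 3)
    (h5 : ∑ i ∈ Finset.range n, x i ^ 5 ≥ y₁ ^ 5 + y₂ ^ 5) :
    x 1 = 0 ∧ x 0 = y₁ := by
  subst hy20
  simp only [ge_iff_le] at h5
  have h0n : 0 < n := lt_of_lt_of_le two_pos hn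
  have hx0 : 0 ≤ x 0 := hnonneg 0 h0n
  -- each x i ≤ x 0
  have hle : ∀ i ∈ Finset.range n, x i ^ 5 ≤ x 0 ^ 2 * x i ^ 3 := by
    intro i hi
    rw [Finset.mem_range] at hi
    have h1 : x i ≤ x 0 := hmono 0 i h0n hi (Nat.zero_le i)
    have h2 : 0 ≤ x i := hnonneg i hi
    nlinarith [mul_nonneg (mul_nonneg (pow_nonneg h2 3) (sub_nonneg.2 h1)) (by linarith : (0:ℝ) ≤ x 0 + x i)]
  have hsum5 : ∑ i ∈ Finset.range n, x i ^ 5 ≤ x 0 ^ 2 * ∑ i ∈ Finset.range n, x i ^ 3 := by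
    rw [Finset.mul_sum]
    exact Finset.sum_le_sum hle
  have hsum3nn : ∀ i ∈ Finset.range n, 0 ≤ x i ^ 3 := by
    intro i hi
    rw [Finset.mem_range] at hi
    exact pow_nonneg (hnonneg i hi) 3
  have hy15 : y₁ ^ 5 ≤ x 0 ^ 2 * y₁ ^ 3 := by
    have : x 0 ^ 2 * ∑ i ∈ Finset.range n, x i ^ 3 ≤ x 0 ^ 2 * (y₁ ^ 3 + 0 ^ 3) :=
      mul_le_mul_of_nonneg_left h3 (sq_nonneg _)
    nlinarith
  have hsq : y₁ ^ 2 ≤ x 0 ^ 2 := by nlinarith [pow_pos hy1 3]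
  have hge : y₁ ≤ x 0 := by nlinarith [hsq, hx0, hy1.le]
  -- upper bound x 0 ≤ y₁
  have hx03 : x 0 ^ 3 ≤ ∑ i ∈ Finset.range n, x i ^ 3 :=
    Finset.single_le_sum hsum3nn (Finset.mem_range.mpr h0n)
  have hx0y3 : x 0 ^ 3 ≤ y₁ ^ 3 := by norm_num at h3; linarith
  have hle0 : x 0 ≤ y₁ := (pow_le_pow_iff_left₀ hx0 hy1.le (by norm_num)).mp hx0y3
  have hx0y : x 0 = y₁ := le_antisymm hle0 hge
  -- x 1 = 0
  have h2sum : ∑ i ∈ Finset.range 2, x i ^ 3 ≤ ∑ i ∈ Finset.range n, x i ^ 3 :=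
    Finset.sum_le_sum_of_subset_of_nonneg
      (Finset.range_subset_range.mpr hn) (fun i hi _ => hsum3nn i hi)
  have h1n : 0 ≤ x 1 := hnonneg 1 (lt_of_lt_of_le one_lt_two hn)
  have hx13 : x 1 ^ 3 ≤ 0 := by
    simp [Finset.sum_range_succ] at h2sum
    rw [hx0y] at h2sum
    norm_num at h3
    linarith
  have hx1 : x 1 = 0 :=
    pow_eq_zero_iff (n := 3) (by norm_num) |>.mp (le_antisymm hx13 (pow_nonneg h1n 3))
  exact ⟨hx1, hx0y⟩
end

section
/- Suppose y₁ ≥ y₂ ≥ 0 with y₁ > 0, and {x_i}_{i∈ℕ} is a nonincreasing sequence of nonnegative reals with Σ_{i=1}^∞ x_i³ ≤ y₁³ + y₂³ and Σ_{i=1}^∞ x_i⁵ ≥ y₁⁵ + y₂⁵. If moreover Σ_{i=1}^∞ x_i⁷ ≤ y₁⁷ + y₂⁷, then x₁ = y₁, x₂ = y₂, x_i = 0 for all i ≥ 3, and equality holds in the first two inequalities. -/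
open Real Set Filter Topology

lemma cs_tsum_aux (f : ℕ → ℝ) (hf : ∀ i, 0 ≤ f i)
    (h3 : Summable fun i => f i ^ 3) (h5 : Summable fun i => f i ^ 5)
    (h7 : Summable fun i => f i ^ 7) :
    (∑' i, f i ^ 5) ^ 2 ≤ (∑' i, f i ^ 3) * (∑' i, f i ^ 7) := by
  have h3nn : ∀ i, (0:ℝ) ≤ f i ^ 3 := fun i => pow_nonneg (hf i) 3
  have h7nn : ∀ i, (0:ℝ) ≤ f i ^ 7 := fun i => pow_nonneg (hf i) 7
  have key : ∀ n : ℕ, (∑ i ∈ Finset.range n, f i ^ 5) ^ 2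
      ≤ (∑' i, f i ^ 3) * (∑' i, f i ^ 7) := by
    intro n
    have e1 : ∀ i, (f i * Real.sqrt (f i)) * (f i ^ 3 * Real.sqrt (f i)) = f i ^ 5 := by
      intro i
      have h := Real.mul_self_sqrt (hf i)
      calc (f i * Real.sqrt (f i)) * (f i ^ 3 * Real.sqrt (f i))
          = (Real.sqrt (f i) * Real.sqrt (f i)) * (f i * f i ^ 3) := by ring
        _ = f i ^ 5 := by rw [h]; ring
    have e2 : ∀ i, (f i * Real.sqrt (f i)) ^ 2 = f i ^ 3 := by
      intro i; rw [mul_pow, Real.sq_sqrt (hf i)]; ring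
    have e3 : ∀ i, (f i ^ 3 * Real.sqrt (f i)) ^ 2 = f i ^ 7 := by
      intro i; rw [mul_pow, Real.sq_sqrt (hf i)]; ring
    calc (∑ i ∈ Finset.range n, f i ^ 5) ^ 2
        = (∑ i ∈ Finset.range n, (f i * Real.sqrt (f i)) * (f i ^ 3 * Real.sqrt (f i))) ^ 2 := by
          rw [Finset.sum_congr rfl fun i _ => (e1 i)]
      _ ≤ (∑ i ∈ Finset.range n, (f i * Real.sqrt (f i)) ^ 2)
            * ∑ i ∈ Finset.range n, (f i ^ 3 * Real.sqrt (f i)) ^ 2 :=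
          Finset.sum_mul_sq_le_sq_mul_sq _ _ _
      _ = (∑ i ∈ Finset.range n, f i ^ 3) * ∑ i ∈ Finset.range n, f i ^ 7 := by
          rw [Finset.sum_congr rfl fun i _ => (e2 i), Finset.sum_congr rfl fun i _ => (e3 i)]
      _ ≤ (∑' i, f i ^ 3) * (∑' i, f i ^ 7) := by
          apply mul_le_mul (Summable.sum_le_tsum _ (fun i _ => h3nn i) h3)
            (Summable.sum_le_tsum _ (fun i _ => h7nn i) h7)
            (Finset.sum_nonneg fun i _ => h7nn i) (tsum_nonneg h3nn)
  have hts : Tendsto (fun n => (∑ i ∈ Finset.range n, f i ^ 5) ^ 2) atTop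
      (𝓝 ((∑' i, f i ^ 5) ^ 2)) := (h5.hasSum.tendsto_sum_nat).pow 2
  exact le_of_tendsto' hts key

set_option maxHeartbeats 1000000 in
theorem infinite_sequence_rigidity (y₁ y₂ : ℝ) (hy : y₁ ≥ y₂) (hy2 : y₂ ≥ 0)
    (hy1 : 0 < y₁) (x : ℕ → ℝ) (hmono : Antitone x) (hnonneg : ∀ i, 0 ≤ x i)
    (hs3 : Summable fun i => x i ^ 3) (hs5 : Summable fun i => x i ^ 5)
    (hs7 : Summable fun i => x i ^ 7)
    (h3 : ∑' i, x i ^ 3 ≤ y₁ ^ 3 + y₂ ^ 3)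
    (h5 : ∑' i, x i ^ 5 ≥ y₁ ^ 5 + y₂ ^ 5)
    (h7 : ∑' i, x i ^ 7 ≤ y₁ ^ 7 + y₂ ^ 7) :
    x 0 = y₁ ∧ x 1 = y₂ ∧ (∀ i, 2 ≤ i → x i = 0) ∧
      (∑' i, x i ^ 3 = y₁ ^ 3 + y₂ ^ 3) ∧ (∑' i, x i ^ 5 = y₁ ^ 5 + y₂ ^ 5) := by
  have ha0 : 0 ≤ x 0 := hnonneg 0
  have hb0 : 0 ≤ x 1 := hnonneg 1
  have hxa : ∀ i, x i ≤ x 0 := fun i => hmono (Nat.zero_le i)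
  have hxb : ∀ i, x (i+1) ≤ x 1 := fun i => hmono (Nat.le_add_left 1 i)
  have hs3' : Summable fun i => x (i+1) ^ 3 := (summable_nat_add_iff 1).2 hs3
  have hs5' : Summable fun i => x (i+1) ^ 5 := (summable_nat_add_iff 1).2 hs5
  have hs7' : Summable fun i => x (i+1) ^ 7 := (summable_nat_add_iff 1).2 hs7
  have hs3'' : Summable fun i => x (i+2) ^ 3 := (summable_nat_add_iff 2).2 hs3
  have e3 : ∑' i, x i ^ 3 = x 0 ^ 3 + ∑' i, x (i+1) ^ 3 := Summable.tsum_eq_zero_add hs3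
  have e5 : ∑' i, x i ^ 5 = x 0 ^ 5 + ∑' i, x (i+1) ^ 5 := Summable.tsum_eq_zero_add hs5
  have e7 : ∑' i, x i ^ 7 = x 0 ^ 7 + ∑' i, x (i+1) ^ 7 := Summable.tsum_eq_zero_add hs7
  have t3nn : 0 ≤ ∑' i, x (i+1) ^ 3 := tsum_nonneg fun i => pow_nonneg (hnonneg _) 3
  have t5nn : 0 ≤ ∑' i, x (i+1) ^ 5 := tsum_nonneg fun i => pow_nonneg (hnonneg _) 5
  have t7nn : 0 ≤ ∑' i, x (i+1) ^ 7 := tsum_nonneg fun i => pow_nonneg (hnonneg _) 7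
  have T3le : ∑' i, x (i+1) ^ 3 ≤ y₁ ^ 3 + y₂ ^ 3 - x 0 ^ 3 := by linarith
  have T7le : ∑' i, x (i+1) ^ 7 ≤ y₁ ^ 7 + y₂ ^ 7 - x 0 ^ 7 := by linarith
  have h5T : y₁ ^ 5 + y₂ ^ 5 ≤ x 0 ^ 5 + ∑' i, x (i+1) ^ 5 := by linarith
  have T5b : ∑' i, x (i+1) ^ 5 ≤ x 1 ^ 2 * ∑' i, x (i+1) ^ 3 := by
    have p : ∀ i, x (i+1) ^ 5 ≤ x 1 ^ 2 * x (i+1) ^ 3 := by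
      intro i
      have h1 : x (i+1) ^ 2 ≤ x 1 ^ 2 := pow_le_pow_left₀ (hnonneg _) (hxb i) 2
      have h2 : (0:ℝ) ≤ x (i+1) ^ 3 := pow_nonneg (hnonneg _) 3
      calc x (i+1) ^ 5 = x (i+1) ^ 2 * x (i+1) ^ 3 := by ring
        _ ≤ x 1 ^ 2 * x (i+1) ^ 3 := mul_le_mul_of_nonneg_right h1 h2
    calc ∑' i, x (i+1) ^ 5 ≤ ∑' i, x 1 ^ 2 * x (i+1) ^ 3 :=
          Summable.tsum_le_tsum p hs5' (hs3'.mul_left _)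
      _ = x 1 ^ 2 * ∑' i, x (i+1) ^ 3 := tsum_mul_left
  have hb3T : x 1 ^ 3 ≤ ∑' i, x (i+1) ^ 3 :=
    Summable.le_tsum hs3' 0 fun j _ => pow_nonneg (hnonneg _) 3
  have ha3 : x 0 ^ 3 ≤ ∑' i, x i ^ 3 :=
    Summable.le_tsum hs3 0 fun j _ => pow_nonneg (hnonneg _) 3
  have ha7 : x 0 ^ 7 ≤ ∑' i, x i ^ 7 :=
    Summable.le_tsum hs7 0 fun j _ => pow_nonneg (hnonneg _) 7
  have rp53 : ∀ t : ℝ, 0 ≤ t → (t ^ 3) ^ ((5:ℝ)/3) = t ^ 5 := by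
    intro t ht
    rw [← Real.rpow_natCast t 3, ← Real.rpow_mul ht,
      show ((3:ℕ):ℝ) * (5/3) = ((5:ℕ):ℝ) by push_cast; ring, Real.rpow_natCast]
  have rp23 : ∀ t : ℝ, 0 ≤ t → (t ^ 3) ^ ((2:ℝ)/3) = t ^ 2 := by
    intro t ht
    rw [← Real.rpow_natCast t 3, ← Real.rpow_mul ht,
      show ((3:ℕ):ℝ) * (2/3) = ((2:ℕ):ℝ) by push_cast; ring, Real.rpow_natCast]
  have rp32 : ∀ t : ℝ, 0 ≤ t → (t ^ 2) ^ ((3:ℝ)/2) = t ^ 3 := by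
    intro t ht
    rw [← Real.rpow_natCast t 2, ← Real.rpow_mul ht,
      show ((2:ℕ):ℝ) * (3/2) = ((3:ℕ):ℝ) by push_cast; ring, Real.rpow_natCast]
  have sc := strictConvexOn_rpow (show (1:ℝ) < 5/3 by norm_num)
  -- Step A': global bound M1 ≤ x0² M0
  have hA2 : y₁ ^ 5 + y₂ ^ 5 ≤ x 0 ^ 2 * (y₁ ^ 3 + y₂ ^ 3) := by
    have p : ∀ i, x i ^ 5 ≤ x 0 ^ 2 * x i ^ 3 := by
      intro i
      have h1 : x i ^ 2 ≤ x 0 ^ 2 := pow_le_pow_left₀ (hnonneg _) (hxa i) 2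
      have h2 : (0:ℝ) ≤ x i ^ 3 := pow_nonneg (hnonneg _) 3
      calc x i ^ 5 = x i ^ 2 * x i ^ 3 := by ring
        _ ≤ x 0 ^ 2 * x i ^ 3 := mul_le_mul_of_nonneg_right h1 h2
    have q : ∑' i, x i ^ 5 ≤ x 0 ^ 2 * ∑' i, x i ^ 3 := by
      calc ∑' i, x i ^ 5 ≤ ∑' i, x 0 ^ 2 * x i ^ 3 := Summable.tsum_le_tsum p hs5 (hs3.mul_left _)
        _ = x 0 ^ 2 * ∑' i, x i ^ 3 := tsum_mul_left
    have r : x 0 ^ 2 * ∑' i, x i ^ 3 ≤ x 0 ^ 2 * (y₁ ^ 3 + y₂ ^ 3) :=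
      mul_le_mul_of_nonneg_left h3 (sq_nonneg _)
    linarith
  -- Step A : y₁ ≤ x 0
  have stepA : y₁ ≤ x 0 := by
    rcases lt_or_eq_of_le (hy : y₂ ≤ y₁) with hlt | heq
    · -- y₂ < y₁ : use strict power mean + convexity increment
      have hy23lt : y₂ ^ 3 < y₁ ^ 3 := pow_lt_pow_left₀ hlt hy2 (by norm_num)
      have hM0pos : (0:ℝ) < y₁ ^ 3 + y₂ ^ 3 := by positivity
      have hhalfpos : (0:ℝ) < (y₁ ^ 3 + y₂ ^ 3)/2 := by positivity
      -- strict midpoint convexity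
      have hmid := sc.2 (show y₁ ^ 3 ∈ Ici (0:ℝ) from pow_nonneg hy1.le 3)
        (show y₂ ^ 3 ∈ Ici (0:ℝ) from pow_nonneg hy2 3) (ne_of_gt hy23lt)
        (show (0:ℝ) < 1/2 by norm_num) (show (0:ℝ) < 1/2 by norm_num) (by norm_num)
      simp only [smul_eq_mul] at hmid
      rw [show (1/2:ℝ) * y₁ ^ 3 + (1/2:ℝ) * y₂ ^ 3 = (y₁ ^ 3 + y₂ ^ 3)/2 by ring,
        rp53 y₁ hy1.le, rp53 y₂ hy2] at hmid
      -- hence x0³ > M0/2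
      have hsplit : ((y₁ ^ 3 + y₂ ^ 3)/2) ^ ((5:ℝ)/3)
          = ((y₁ ^ 3 + y₂ ^ 3)/2) ^ ((2:ℝ)/3) * ((y₁ ^ 3 + y₂ ^ 3)/2) := by
        rw [show (5:ℝ)/3 = 2/3 + 1 by norm_num, Real.rpow_add hhalfpos, Real.rpow_one]
      have hc23 : ((y₁ ^ 3 + y₂ ^ 3)/2) ^ ((2:ℝ)/3) < x 0 ^ 2 := by
        have h1 : ((y₁ ^ 3 + y₂ ^ 3)/2) ^ ((2:ℝ)/3) * (y₁ ^ 3 + y₂ ^ 3)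
            < x 0 ^ 2 * (y₁ ^ 3 + y₂ ^ 3) := by
          rw [hsplit] at hmid; nlinarith
        exact lt_of_mul_lt_mul_right h1 hM0pos.le
      have ha3half : (y₁ ^ 3 + y₂ ^ 3)/2 < x 0 ^ 3 := by
        have h2 : (((y₁ ^ 3 + y₂ ^ 3)/2) ^ ((2:ℝ)/3)) ^ ((3:ℝ)/2) < (x 0 ^ 2) ^ ((3:ℝ)/2) :=
          Real.rpow_lt_rpow (Real.rpow_nonneg hhalfpos.le _) hc23 (by norm_num)
        rwa [← Real.rpow_mul hhalfpos.le, show (2/3:ℝ) * (3/2) = 1 by norm_num,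
          Real.rpow_one, rp32 (x 0) ha0] at h2
      by_contra hcon
      push_neg at hcon
      have ha3lt : x 0 ^ 3 < y₁ ^ 3 := pow_lt_pow_left₀ hcon ha0 (by norm_num)
      have hy23a : y₂ ^ 3 < x 0 ^ 3 := by nlinarith
      have hDpos : (0:ℝ) < y₁ ^ 3 + y₂ ^ 3 - x 0 ^ 3 := by nlinarith [pow_nonneg hy2 3]
      have hb3D : x 1 ^ 3 ≤ y₁ ^ 3 + y₂ ^ 3 - x 0 ^ 3 := le_trans hb3T T3le
      have hb2D : x 1 ^ 2 ≤ (y₁ ^ 3 + y₂ ^ 3 - x 0 ^ 3) ^ ((2:ℝ)/3) := by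
        calc x 1 ^ 2 = (x 1 ^ 3) ^ ((2:ℝ)/3) := (rp23 _ hb0).symm
          _ ≤ (y₁ ^ 3 + y₂ ^ 3 - x 0 ^ 3) ^ ((2:ℝ)/3) :=
            Real.rpow_le_rpow (pow_nonneg hb0 3) hb3D (by norm_num)
      have hT5D : ∑' i, x (i+1) ^ 5 ≤ (y₁ ^ 3 + y₂ ^ 3 - x 0 ^ 3) ^ ((5:ℝ)/3) := by
        calc ∑' i, x (i+1) ^ 5 ≤ x 1 ^ 2 * ∑' i, x (i+1) ^ 3 := T5b
          _ ≤ x 1 ^ 2 * (y₁ ^ 3 + y₂ ^ 3 - x 0 ^ 3) :=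
            mul_le_mul_of_nonneg_left T3le (sq_nonneg _)
          _ ≤ (y₁ ^ 3 + y₂ ^ 3 - x 0 ^ 3) ^ ((2:ℝ)/3) * (y₁ ^ 3 + y₂ ^ 3 - x 0 ^ 3) :=
            mul_le_mul_of_nonneg_right hb2D hDpos.le
          _ = (y₁ ^ 3 + y₂ ^ 3 - x 0 ^ 3) ^ ((5:ℝ)/3) := by
            rw [show (5:ℝ)/3 = 2/3 + 1 by norm_num, Real.rpow_add hDpos, Real.rpow_one]
      -- convexity increment
      have hden : (0:ℝ) < y₁ ^ 3 - y₂ ^ 3 := by linarith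
      have hlam0 : (0:ℝ) < (y₁ ^ 3 - x 0 ^ 3)/(y₁ ^ 3 - y₂ ^ 3) :=
        div_pos (by linarith) hden
      have hlam1 : (y₁ ^ 3 - x 0 ^ 3)/(y₁ ^ 3 - y₂ ^ 3) < 1 :=
        (div_lt_one hden).2 (by linarith)
      have hcomb1 : ((y₁ ^ 3 - x 0 ^ 3)/(y₁ ^ 3 - y₂ ^ 3)) * y₁ ^ 3
          + (1 - (y₁ ^ 3 - x 0 ^ 3)/(y₁ ^ 3 - y₂ ^ 3)) * y₂ ^ 3
          = y₁ ^ 3 + y₂ ^ 3 - x 0 ^ 3 := by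
        field_simp
        ring
      have hcomb2 : (1 - (y₁ ^ 3 - x 0 ^ 3)/(y₁ ^ 3 - y₂ ^ 3)) * y₁ ^ 3
          + ((y₁ ^ 3 - x 0 ^ 3)/(y₁ ^ 3 - y₂ ^ 3)) * y₂ ^ 3 = x 0 ^ 3 := by
        linarith [hcomb1]
      have hkey1 := sc.2 (show y₁ ^ 3 ∈ Ici (0:ℝ) from pow_nonneg hy1.le 3)
        (show y₂ ^ 3 ∈ Ici (0:ℝ) from pow_nonneg hy2 3) (ne_of_gt hy23lt)
        hlam0 (show (0:ℝ) < 1 - (y₁ ^ 3 - x 0 ^ 3)/(y₁ ^ 3 - y₂ ^ 3) by linarith) (by ring)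
      simp only [smul_eq_mul] at hkey1
      rw [hcomb1, rp53 y₁ hy1.le, rp53 y₂ hy2] at hkey1
      have hkey2 := sc.convexOn.2 (show y₁ ^ 3 ∈ Ici (0:ℝ) from pow_nonneg hy1.le 3)
        (show y₂ ^ 3 ∈ Ici (0:ℝ) from pow_nonneg hy2 3)
        (show (0:ℝ) ≤ 1 - (y₁ ^ 3 - x 0 ^ 3)/(y₁ ^ 3 - y₂ ^ 3) by linarith)
        (show (0:ℝ) ≤ (y₁ ^ 3 - x 0 ^ 3)/(y₁ ^ 3 - y₂ ^ 3) from hlam0.le) (by ring)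
      simp only [smul_eq_mul] at hkey2
      rw [hcomb2, rp53 y₁ hy1.le, rp53 y₂ hy2, rp53 (x 0) ha0] at hkey2
      linarith
    · -- y₂ = y₁
      rw [← heq] at hA2 hy1 ⊢
      by_contra hcon
      push_neg at hcon
      have hx2 : x 0 ^ 2 < y₂ ^ 2 := by nlinarith
      nlinarith [pow_pos hy1 3]
  -- Step B : x 0 ≤ y₁
  have stepB : x 0 ≤ y₁ := by
    by_contra hcon
    push_neg at hcon
    have ha7M : x 0 ^ 7 ≤ y₁ ^ 7 + y₂ ^ 7 := le_trans ha7 h7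
    have hy1a2 : y₁ ^ 2 < x 0 ^ 2 := pow_lt_pow_left₀ hcon hy1.le (by norm_num)
    have hy2a2 : y₂ ^ 2 ≤ x 0 ^ 2 := pow_le_pow_left₀ hy2 (by linarith) 2
    rcases le_or_gt (y₁ ^ 5 + y₂ ^ 5) (x 0 ^ 5) with hc | hc
    · -- then x0^7 > M2
      have h1 : x 0 ^ 7 = x 0 ^ 2 * x 0 ^ 5 := by ring
      have h2 : x 0 ^ 2 * (y₁ ^ 5 + y₂ ^ 5) ≤ x 0 ^ 2 * x 0 ^ 5 :=
        mul_le_mul_of_nonneg_left hc (sq_nonneg _)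
      nlinarith [pow_pos hy1 5, pow_nonneg hy2 5]
    · -- Cauchy-Schwarz route
      have hcs := cs_tsum_aux (fun i => x (i+1)) (fun i => hnonneg _) hs3' hs5' hs7'
      have hT5ge : y₁ ^ 5 + y₂ ^ 5 - x 0 ^ 5 ≤ ∑' i, x (i+1) ^ 5 := by linarith
      have hq : (y₁ ^ 5 + y₂ ^ 5 - x 0 ^ 5) ^ 2 ≤ (∑' i, x (i+1) ^ 5) ^ 2 :=
        pow_le_pow_left₀ (by linarith) hT5ge 2
      have hprod : (∑' i, x (i+1) ^ 3) * (∑' i, x (i+1) ^ 7)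
          ≤ (y₁ ^ 3 + y₂ ^ 3 - x 0 ^ 3) * (y₁ ^ 7 + y₂ ^ 7 - x 0 ^ 7) :=
        mul_le_mul T3le T7le t7nn (le_trans t3nn T3le)
      have hfin : (y₁ ^ 5 + y₂ ^ 5 - x 0 ^ 5) ^ 2
          ≤ (y₁ ^ 3 + y₂ ^ 3 - x 0 ^ 3) * (y₁ ^ 7 + y₂ ^ 7 - x 0 ^ 7) := by
        linarith only [hq, hcs, hprod]
      have hid : (y₁ ^ 5 + y₂ ^ 5 - x 0 ^ 5) ^ 2
            - (y₁ ^ 3 + y₂ ^ 3 - x 0 ^ 3) * (y₁ ^ 7 + y₂ ^ 7 - x 0 ^ 7)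
          = y₁ ^ 3 * x 0 ^ 3 * (x 0 ^ 2 - y₁ ^ 2) ^ 2
            + y₂ ^ 3 * (x 0 ^ 3 * (x 0 ^ 2 - y₂ ^ 2) ^ 2
              - y₁ ^ 3 * (y₁ ^ 2 - y₂ ^ 2) ^ 2) := by ring
      have ha0' : 0 < x 0 := lt_trans hy1 hcon
      have hpos1 : 0 < y₁ ^ 3 * x 0 ^ 3 * (x 0 ^ 2 - y₁ ^ 2) ^ 2 :=
        mul_pos (mul_pos (pow_pos hy1 3) (pow_pos ha0' 3))
          (pow_pos (by linarith) 2)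
      have hpos2 : 0 ≤ y₂ ^ 3 * (x 0 ^ 3 * (x 0 ^ 2 - y₂ ^ 2) ^ 2
          - y₁ ^ 3 * (y₁ ^ 2 - y₂ ^ 2) ^ 2) := by
        apply mul_nonneg (pow_nonneg hy2 3)
        have e1 : y₁ ^ 3 ≤ x 0 ^ 3 := pow_le_pow_left₀ hy1.le hcon.le 3
        have e2 : (y₁ ^ 2 - y₂ ^ 2) ^ 2 ≤ (x 0 ^ 2 - y₂ ^ 2) ^ 2 := by
          have i1 : (0:ℝ) ≤ y₁ ^ 2 - y₂ ^ 2 := sub_nonneg.2 (pow_le_pow_left₀ hy2 hy 2)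
          exact pow_le_pow_left₀ i1 (by linarith only [hy1a2]) 2
        have := mul_le_mul e1 e2 (sq_nonneg _) (pow_nonneg ha0 3)
        linarith only [this]
      linarith only [hfin, hid, hpos1, hpos2]
  have hxa0 : x 0 = y₁ := le_antisymm stepB stepA
  -- tail facts with x 0 = y₁
  have T3le2 : ∑' i, x (i+1) ^ 3 ≤ y₂ ^ 3 := by rw [hxa0] at T3le; linarith
  have T7le2 : ∑' i, x (i+1) ^ 7 ≤ y₂ ^ 7 := by rw [hxa0] at T7le; linarith
  have T5ge2 : y₂ ^ 5 ≤ ∑' i, x (i+1) ^ 5 := by rw [hxa0] at h5T; linarith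
  have hb7 : x 1 ^ 7 ≤ y₂ ^ 7 :=
    le_trans (Summable.le_tsum hs7' 0 fun j _ => pow_nonneg (hnonneg _) 7) T7le2
  have hbley : x 1 ≤ y₂ := by
    by_contra hb
    push_neg at hb
    exact absurd hb7 (not_le.2 (pow_lt_pow_left₀ hb hy2 (by norm_num)))
  have hbgey : y₂ ≤ x 1 := by
    rcases eq_or_lt_of_le hy2 with h0 | h0
    · rw [← h0]; exact hb0
    · have hmain : y₂ ^ 5 ≤ x 1 ^ 2 * y₂ ^ 3 :=
        le_trans T5ge2 (le_trans T5b (mul_le_mul_of_nonneg_left T3le2 (sq_nonneg _)))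
      by_contra hb
      push_neg at hb
      have : x 1 ^ 2 < y₂ ^ 2 := pow_lt_pow_left₀ hb hb0 (by norm_num)
      nlinarith [pow_pos h0 3]
  have hxb1 : x 1 = y₂ := le_antisymm hbley hbgey
  -- tail beyond the second term vanishes
  have e3' : ∑' i, x (i+1) ^ 3 = x 1 ^ 3 + ∑' i, x (i+2) ^ 3 := Summable.tsum_eq_zero_add hs3'
  have e5' : ∑' i, x (i+1) ^ 5 = x 1 ^ 5 + ∑' i, x (i+2) ^ 5 :=
    Summable.tsum_eq_zero_add hs5'
  have t3''nn : 0 ≤ ∑' i, x (i+2) ^ 3 := tsum_nonneg fun i => pow_nonneg (hnonneg _) 3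
  have t3''le : ∑' i, x (i+2) ^ 3 ≤ 0 := by rw [hxb1] at e3'; linarith
  have hzero : ∀ i, x (i+2) = 0 := by
    intro i
    have h1 : x (i+2) ^ 3 ≤ ∑' i, x (i+2) ^ 3 :=
      Summable.le_tsum hs3'' i fun j _ => pow_nonneg (hnonneg _) 3
    have h2 : x (i+2) ^ 3 = 0 :=
      le_antisymm (by linarith) (pow_nonneg (hnonneg _) 3)
    exact pow_eq_zero_iff (by norm_num) |>.1 h2
  have tz3 : ∑' i, x (i+2) ^ 3 = 0 := le_antisymm t3''le t3''nn
  have tz5 : ∑' i, x (i+2) ^ 5 = 0 := by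
    have : (fun i => x (i+2) ^ 5) = fun _ => (0:ℝ) := funext fun i => by
      rw [hzero i]; norm_num
    rw [this, tsum_zero]
  refine ⟨hxa0, hxb1, ?_, ?_, ?_⟩
  · intro i hi
    obtain ⟨j, rfl⟩ : ∃ j, i = j + 2 := ⟨i - 2, by omega⟩
    exact hzero j
  · rw [e3, e3', tz3, hxa0, hxb1]; ring
  · rw [e5, e5', tz5, hxa0, hxb1]; ring
end

section
/- For every p with 2 < p ≤ ∞ there exists a constant C_p > 0 such that for all u ∈ H¹(ℝ), ‖u‖_{L^p(ℝ)} ≤ C_p (sup_{y∈ℝ} ∫_{B(y,1)} (|u′|² + |u|²) dx)^{1/2 − 1/p} ‖u‖_{H¹(ℝ)}^{2/p}. -/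
/-!
Writing `2 u u' = (u²)'` and using `2|u u'| ≤ u'² + u²`, the fundamental theorem of calculus gives
`u(x)² ≤ u(y)² + ∫_{B(x,1)} (u'² + u²)` for `y ∈ B(x,1)`; averaging over `y` yields
`‖u‖_∞² ≤ 3/2 · sup_y ∫_{B(y,1)} (u'² + u²)`. The estimate then follows from the interpolation
inequality `‖u‖_p ≤ ‖u‖_∞^{1 - 2/p} ‖u‖_2^{2/p}`.
-/

open MeasureTheory Set
open scoped ENNReal Interval

namespace MeasureTheory

theorem eLpNorm_le_eLpNorm_top_rpow_mul_eLpNorm_rpow {α E : Type*} [MeasurableSpace α]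
    {μ : Measure α} [TopologicalSpace E] [ContinuousENorm E] {f : α → E}
    (hf : AEStronglyMeasurable f μ) {p q : ℝ≥0∞} (hq₀ : q ≠ 0) (hq : q ≠ ∞) (hqp : q ≤ p) :
    eLpNorm f p μ ≤ eLpNorm f ∞ μ ^ (1 - (q / p).toReal) * eLpNorm f q μ ^ (q / p).toReal := by
  rcases eq_or_ne p ∞ with rfl | hp
  · simp
  have hp₀ : p ≠ 0 := (lt_of_lt_of_le (pos_iff_ne_zero.2 hq₀) hqp).ne'
  set r := p.toReal
  set s := q.toReal
  have hs : 0 < s := ENNReal.toReal_pos hq₀ hq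
  have hsr : s ≤ r := ENNReal.toReal_mono hp hqp
  have hr : 0 < r := hs.trans_le hsr
  have hpointwise : ∀ᵐ x ∂μ, ‖f x‖ₑ ^ r ≤ eLpNorm f ∞ μ ^ (r - s) * ‖f x‖ₑ ^ s := by
    filter_upwards [ae_le_eLpNormEssSup (f := f) (μ := μ)] with x hx
    calc ‖f x‖ₑ ^ r = ‖f x‖ₑ ^ (r - s) * ‖f x‖ₑ ^ s := by
          rw [← ENNReal.rpow_add_of_nonneg _ _ (sub_nonneg.2 hsr) hs.le, sub_add_cancel]
      _ ≤ eLpNorm f ∞ μ ^ (r - s) * ‖f x‖ₑ ^ s := by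
          rw [eLpNorm_exponent_top]; gcongr
  calc eLpNorm f p μ = (∫⁻ x, ‖f x‖ₑ ^ r ∂μ) ^ (1 / r) :=
        eLpNorm_eq_lintegral_rpow_enorm_toReal hp₀ hp
    _ ≤ (eLpNorm f ∞ μ ^ (r - s) * ∫⁻ x, ‖f x‖ₑ ^ s ∂μ) ^ (1 / r) := by
        rw [← lintegral_const_mul'' _ (hf.enorm.pow_const s)]
        gcongr ?_ ^ _
        exact lintegral_mono_ae hpointwise
    _ = eLpNorm f ∞ μ ^ (1 - s / r) * ((∫⁻ x, ‖f x‖ₑ ^ s ∂μ) ^ (1 / s)) ^ (s / r) := by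
        rw [ENNReal.mul_rpow_of_nonneg _ _ (by positivity), ← ENNReal.rpow_mul, ← ENNReal.rpow_mul]
        congr 2 <;> field_simp
    _ = eLpNorm f ∞ μ ^ (1 - (q / p).toReal) * eLpNorm f q μ ^ (q / p).toReal := by
        rw [eLpNorm_eq_lintegral_rpow_enorm_toReal hq₀ hq, ENNReal.toReal_div]

theorem toReal_eLpNorm_le_rpow_mul_rpow_of_eLpNorm_le_sqrt {α E : Type*} [MeasurableSpace α]
    {μ : Measure α} [TopologicalSpace E] [ContinuousENorm E] {f : α → E}
    (hf : AEStronglyMeasurable f μ) {p : ℝ≥0∞} (hp : 2 ≤ p) {A B : ℝ} (hA : 0 ≤ A) (hB : 0 ≤ B)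
    (htop : eLpNorm f ∞ μ ≤ ENNReal.ofReal √A) (htwo : eLpNorm f 2 μ ≤ ENNReal.ofReal √B) :
    (eLpNorm f p μ).toReal ≤ A ^ (1 / 2 - (1 / p).toReal) * B ^ (1 / p).toReal := by
  set t := (1 / p).toReal
  have hθ : (2 / p).toReal = 2 * t := by
    rw [ENNReal.div_eq_inv_mul, ENNReal.toReal_mul, mul_comm]
    simp [t]
  have ht : 2 * t ≤ 1 := by
    rw [← hθ]
    exact ENNReal.toReal_le_of_le_ofReal zero_le_one (by
      rw [ENNReal.ofReal_one]; exact ENNReal.div_le_of_le_mul (by rw [one_mul]; exact hp))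
  have hinterp : eLpNorm f p μ ≤ ENNReal.ofReal (√A ^ (1 - 2 * t) * √B ^ (2 * t)) :=
    calc eLpNorm f p μ ≤ eLpNorm f ∞ μ ^ (1 - 2 * t) * eLpNorm f 2 μ ^ (2 * t) := by
          simpa only [hθ] using eLpNorm_le_eLpNorm_top_rpow_mul_eLpNorm_rpow hf two_ne_zero
            ENNReal.ofNat_ne_top hp
      _ ≤ ENNReal.ofReal √A ^ (1 - 2 * t) * ENNReal.ofReal √B ^ (2 * t) := by gcongr
      _ = _ := by
          rw [ENNReal.ofReal_mul (by positivity), ENNReal.ofReal_rpow_of_nonneg (by positivity)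
            (by linarith), ENNReal.ofReal_rpow_of_nonneg (by positivity) (by positivity)]
  refine (ENNReal.toReal_le_of_le_ofReal (by positivity) hinterp).trans_eq ?_
  rw [← Real.rpow_div_two_eq_sqrt _ hA, ← Real.rpow_div_two_eq_sqrt _ hB,
    show (1 - 2 * t) / 2 = 1 / 2 - t by ring, show 2 * t / 2 = t by ring]

theorem MemLp.eLpNorm_two_eq_ofReal_sqrt_integral_sq {α : Type*} [MeasurableSpace α]
    {μ : Measure α} {f : α → ℝ} (hf : MemLp f 2 μ) :
    eLpNorm f 2 μ = ENNReal.ofReal √(∫ x, f x ^ 2 ∂μ) := by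
  rw [hf.eLpNorm_eq_integral_rpow_norm two_ne_zero ENNReal.ofNat_ne_top]
  simp only [ENNReal.toReal_ofNat, Real.rpow_two, Real.norm_eq_abs, sq_abs, Real.sqrt_eq_rpow,
    one_div]

end MeasureTheory

section

variable {u u' : ℝ → ℝ}

theorem sq_sub_sq_le_setIntegral_of_hasDerivAt (hu : ∀ t, HasDerivAt u (u' t) t) {s : Set ℝ}
    (hs : s.OrdConnected) (hint : IntegrableOn (fun t => u' t ^ 2 + u t ^ 2) s) {x y : ℝ}
    (hx : x ∈ s) (hy : y ∈ s) :
    u x ^ 2 - u y ^ 2 ≤ ∫ t in s, (u' t ^ 2 + u t ^ 2) := by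
  have hu_cont : Continuous u := continuous_iff_continuousAt.2 fun t => (hu t).continuousAt
  have hu'_meas : Measurable u' := (funext fun t => (hu t).deriv) ▸ measurable_deriv u
  have hbound : ∀ t, |2 * u t * u' t| ≤ u' t ^ 2 + u t ^ 2 := fun t =>
    abs_le.2 ⟨by nlinarith [sq_nonneg (u t + u' t)], by nlinarith [sq_nonneg (u t - u' t)]⟩
  have hint' : IntegrableOn (fun t => 2 * u t * u' t) s :=
    hint.mono' ((continuous_const.mul hu_cont).aestronglyMeasurable.mul
      hu'_meas.aestronglyMeasurable) (ae_of_all _ hbound)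
  have hsub : Ι y x ⊆ s := uIoc_subset_uIcc.trans (hs.uIcc_subset hy hx)
  have hftc : ∫ t in y..x, 2 * u t * u' t = u x ^ 2 - u y ^ 2 :=
    intervalIntegral.integral_eq_sub_of_hasDerivAt
      (fun t _ => by simpa [mul_comm] using (hu t).pow 2)
      ((intervalIntegrable_iff).2 (hint'.mono_set hsub))
  calc u x ^ 2 - u y ^ 2 = ∫ t in y..x, 2 * u t * u' t := hftc.symm
    _ ≤ ∫ t in Ι y x, |2 * u t * u' t| :=
        (le_abs_self _).trans <| by
          simpa only [Real.norm_eq_abs] using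
            intervalIntegral.norm_integral_le_integral_norm_uIoc (f := fun t => 2 * u t * u' t)
    _ ≤ ∫ t in s, |2 * u t * u' t| :=
        setIntegral_mono_set hint'.abs (ae_of_all _ fun t => abs_nonneg _) hsub.eventuallyLE
    _ ≤ ∫ t in s, (u' t ^ 2 + u t ^ 2) := integral_mono hint'.abs hint hbound

theorem sq_le_setIntegral_Ioo_of_hasDerivAt (hu : ∀ t, HasDerivAt u (u' t) t) (x : ℝ)
    (hint : IntegrableOn (fun t => u' t ^ 2 + u t ^ 2) (Ioo (x - 1) (x + 1))) :
    u x ^ 2 ≤ 3 / 2 * ∫ t in Ioo (x - 1) (x + 1), (u' t ^ 2 + u t ^ 2) := by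
  set G := ∫ t in Ioo (x - 1) (x + 1), (u' t ^ 2 + u t ^ 2)
  have hu_cont : Continuous u := continuous_iff_continuousAt.2 fun t => (hu t).continuousAt
  have hint_sq : IntegrableOn (fun t => u t ^ 2) (Ioo (x - 1) (x + 1)) :=
    hint.mono' (hu_cont.pow 2).aestronglyMeasurable
      (ae_of_all _ fun t => by
        simpa only [norm_pow, Real.norm_eq_abs, sq_abs] using le_add_of_nonneg_left (sq_nonneg _))
  have hvol : volume.real (Ioo (x - 1) (x + 1)) = 2 := by
    rw [Real.volume_real_Ioo_of_le (by linarith)]; ring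
  have haverage : 2 * u x ^ 2 ≤ (∫ t in Ioo (x - 1) (x + 1), u t ^ 2) + 2 * G := by
    have hmono := setIntegral_mono_on (f := fun _ => u x ^ 2) (g := fun y => u y ^ 2 + G)
      (integrableOn_const measure_Ioo_lt_top.ne)
      (hint_sq.add (integrableOn_const measure_Ioo_lt_top.ne)) measurableSet_Ioo
      fun y hy => sub_le_iff_le_add'.1 <|
        sq_sub_sq_le_setIntegral_of_hasDerivAt hu ordConnected_Ioo hint
          ⟨by linarith, by linarith⟩ hy
    rwa [setIntegral_const, integral_add hint_sq (integrableOn_const measure_Ioo_lt_top.ne),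
      setIntegral_const, hvol, smul_eq_mul, smul_eq_mul] at hmono
  have hsq_le : ∫ t in Ioo (x - 1) (x + 1), u t ^ 2 ≤ G :=
    integral_mono hint_sq hint fun t => le_add_of_nonneg_left (sq_nonneg _)
  linarith

theorem eLpNorm_top_le_sqrt_iSup_setIntegral_Ioo_of_hasDerivAt (hu : ∀ t, HasDerivAt u (u' t) t)
    (hint : Integrable (fun t => u' t ^ 2 + u t ^ 2)) :
    eLpNorm u ∞ volume ≤
      ENNReal.ofReal √(3 / 2 * ⨆ y : ℝ, ∫ t in Ioo (y - 1) (y + 1), (u' t ^ 2 + u t ^ 2)) := by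
  have hbdd : BddAbove (range fun y => ∫ t in Ioo (y - 1) (y + 1), (u' t ^ 2 + u t ^ 2)) :=
    ⟨_, forall_mem_range.2 fun y =>
      setIntegral_le_integral hint (ae_of_all _ fun t => by positivity)⟩
  exact eLpNormEssSup_le_of_ae_bound <| ae_of_all _ fun x => Real.abs_le_sqrt <|
    (sq_le_setIntegral_Ioo_of_hasDerivAt hu x hint.integrableOn).trans
      (by gcongr; exact le_ciSup hbdd x)

end

theorem lp_vanishing_estimate (p : ℝ≥0∞) (hp : 2 < p) :
    ∃ C : ℝ, 0 < C ∧ ∀ u u' : ℝ → ℝ,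
      (∀ x, HasDerivAt u (u' x) x) →
      MemLp u 2 (volume : Measure ℝ) → MemLp u' 2 (volume : Measure ℝ) →
      (eLpNorm u p (volume : Measure ℝ)).toReal ≤
        C * (⨆ y : ℝ, ∫ x in Set.Ioo (y - 1) (y + 1), ((u' x) ^ 2 + (u x) ^ 2))
              ^ ((1 : ℝ) / 2 - (1 / p).toReal)
          * (∫ x : ℝ, ((u x) ^ 2 + (u' x) ^ 2)) ^ ((1 / p).toReal) := by
  refine ⟨(3 / 2) ^ (1 / 2 - (1 / p).toReal), by positivity, fun u u' hu hu2 hu'2 => ?_⟩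
  set S := ⨆ y : ℝ, ∫ x in Ioo (y - 1) (y + 1), (u' x ^ 2 + u x ^ 2)
  have hS₀ : 0 ≤ S :=
    Real.iSup_nonneg fun y => setIntegral_nonneg measurableSet_Ioo fun x _ => by positivity
  have htop := eLpNorm_top_le_sqrt_iSup_setIntegral_Ioo_of_hasDerivAt hu
    (hu'2.integrable_sq.add hu2.integrable_sq)
  have htwo : eLpNorm u 2 volume ≤ ENNReal.ofReal √(∫ x : ℝ, (u x ^ 2 + u' x ^ 2)) := by
    rw [hu2.eLpNorm_two_eq_ofReal_sqrt_integral_sq]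
    exact ENNReal.ofReal_le_ofReal <| Real.sqrt_le_sqrt <|
      integral_mono hu2.integrable_sq (hu2.integrable_sq.add hu'2.integrable_sq) fun x =>
        le_add_of_nonneg_right (sq_nonneg (u' x))
  refine (toReal_eLpNorm_le_rpow_mul_rpow_of_eLpNorm_le_sqrt hu2.1 hp.le (by positivity)
    (integral_nonneg fun x => by positivity) htop htwo).trans_eq ?_
  rw [Real.mul_rpow (by norm_num) hS₀, mul_assoc]
end

section
/- Let g : ℝ → ℝ be a nonzero function in H²(ℝ) and set a = (1/2)∫ g² dx, b = ∫ ((1/2)(g′)² − (1/6)g³) dx. Then a > 0 and b ≥ −μ a^{5/3} where μ = (36/5)(1/12)^{5/3}. Conversely, for any pair (a,b) with a > 0 and b ≥ −μ a^{5/3}, there exists a nonzero g ∈ H²(ℝ) with E₂(g) = a and E₃(g) = b. -/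
/-!
If `M = max g > 0` and `Φ` is a primitive of `φ s = s √(M - s) / √3`, then
`φ s ^ 2 = (M s² - s³) / 3`, so by AM-GM `|(Φ ∘ g)'| ≤ g'² / 2 + (M g² - g³) / 6`. Since `g ∈ H¹`
vanishes at infinity, integrating on both sides of a maximum point gives
`2 Φ M ≤ E₃ g + (M / 3) E₂ g`, with `2 Φ M = 8 M^(5/2) / (15 √3)`; optimising in `M`
(AM-GM for `2 x⁵ + 3 y⁵`) gives `E₃ ≥ -μ E₂^(5/3)`.

Conversely `α sech² (β x)` has `E₂ = 2α² / (3β)` and `E₃ = 8α²β/15 - 8α³/(45β)` (the integrals of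
`sech⁴` and `sech⁶` are computed with the substitution `y = tanh x`). Imposing `E₂ = a` forces
`β = 2α² / (3a)`, and then `E₃` is a quartic in `α` which equals `-μ a^(5/3)` at the soliton
`α = 3 (a/12)^(2/3)` and tends to `+∞`, so every `b ≥ -μ a^(5/3)` is attained.
-/

open MeasureTheory Set Filter Real Topology

theorem tendsto_cocompact_zero_of_memLp_two {g g' : ℝ → ℝ} (hd : ∀ x, HasDerivAt g (g' x) x)
    (hg : MemLp g 2) (hg' : MemLp g' 2) : Tendsto g (cocompact ℝ) (𝓝 0) := by
  have hderiv (x : ℝ) : HasDerivAt (fun y => g y ^ 2) (2 * g x * g' x) x :=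
    ((hd x).fun_pow 2).congr_deriv (by ring)
  have hint : Integrable fun x => 2 * g x * g' x := by
    simpa only [Pi.mul_apply, mul_assoc] using (hg.integrable_mul hg').const_mul 2
  have hsq : Integrable fun x => g x ^ 2 := hg.integrable_sq
  have hsq_lim : Tendsto (fun x => g x ^ 2) (cocompact ℝ) (𝓝 0) := by
    rw [cocompact_eq_atBot_atTop]
    exact tendsto_sup.2
      ⟨tendsto_zero_of_hasDerivAt_of_integrableOn_Iic (a := 0) (fun x _ => hderiv x)
          hint.integrableOn hsq.integrableOn,
        tendsto_zero_of_hasDerivAt_of_integrableOn_Ioi (a := 0) (fun x _ => hderiv x)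
          hint.integrableOn hsq.integrableOn⟩
  rw [tendsto_zero_iff_abs_tendsto_zero]
  simpa [Function.comp_def, sqrt_sq_eq_abs] using hsq_lim.sqrt

theorem MeasureTheory.Integrable.pow_three_of_tendsto_cocompact {g : ℝ → ℝ}
    (hsq : Integrable fun x => g x ^ 2) (hcont : Continuous g)
    (hdecay : Tendsto g (cocompact ℝ) (𝓝 0)) : Integrable fun x => g x ^ 3 := by
  obtain ⟨C, hC⟩ := isBounded_iff_forall_norm_le.1
    (ZeroAtInftyContinuousMap.isBounded_range ⟨⟨g, hcont⟩, hdecay⟩)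
  refine (hsq.bdd_mul hcont.aestronglyMeasurable
    (Eventually.of_forall fun x => hC _ (mem_range_self x))).congr
    (Eventually.of_forall fun x => ?_)
  simp only
  ring

theorem integral_sq_pos_of_ne_zero {g : ℝ → ℝ} (hcont : Continuous g)
    (hsq : Integrable fun x => g x ^ 2) (hne : g ≠ 0) : 0 < ∫ x, g x ^ 2 := by
  rw [integral_pos_iff_support_of_nonneg (fun x => sq_nonneg (g x)) hsq]
  obtain ⟨x, hx⟩ := Function.ne_iff.1 hne
  refine (isOpen_compl_singleton.preimage (hcont.pow 2)).measure_pos _ ⟨x, ?_⟩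
  simpa using hx

theorem two_mul_abs_le_integral_abs_of_hasDerivAt {u u' : ℝ → ℝ}
    (hd : ∀ x, HasDerivAt u (u' x) x) (hu' : Integrable u')
    (hbot : Tendsto u atBot (𝓝 0)) (htop : Tendsto u atTop (𝓝 0)) (x₀ : ℝ) :
    2 * |u x₀| ≤ ∫ x, |u' x| := by
  have hleft : |u x₀| ≤ ∫ x in Iic x₀, |u' x| := by
    have h := integral_Iic_of_hasDerivAt_of_tendsto' (a := x₀) (fun x _ => hd x)
      hu'.integrableOn hbot
    rw [sub_zero] at h
    rw [← h]
    exact abs_integral_le_integral_abs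
  have hright : |u x₀| ≤ ∫ x in Ioi x₀, |u' x| := by
    have h := integral_Ioi_of_hasDerivAt_of_tendsto' (a := x₀) (fun x _ => hd x)
      hu'.integrableOn htop
    rw [zero_sub] at h
    rw [← abs_neg (u x₀), ← h]
    exact abs_integral_le_integral_abs
  rw [← intervalIntegral.integral_Iic_add_Ioi hu'.abs.integrableOn hu'.abs.integrableOn]
  linarith

theorem integral_mul_sqrt_sub {M : ℝ} (hM : 0 ≤ M) :
    ∫ t in (0 : ℝ)..M, t * √(M - t) = 4 / 15 * M ^ 2 * √M := by
  set G : ℝ → ℝ := fun t => 2 / 5 * (M - t) ^ 2 * √(M - t) - 2 / 3 * M * (M - t) * √(M - t)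
  have hderiv (t : ℝ) (ht : t ∈ Ioo 0 M) : HasDerivAt G (t * √(M - t)) t := by
    have hpos : 0 < M - t := sub_pos.2 ht.2
    have hsub : HasDerivAt (fun x => M - x) (-1) t := by simpa using (hasDerivAt_id t).const_sub M
    have hsqrt := hsub.sqrt hpos.ne'
    refine (((hsub.fun_pow 2).const_mul (2 / 5)).fun_mul hsqrt |>.fun_sub
      ((hsub.const_mul (2 / 3 * M)).fun_mul hsqrt)).congr_deriv ?_
    have hr := sq_sqrt hpos.le
    have := (sqrt_pos.2 hpos).ne'
    field_simp
    rw [hr]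
    ring
  rw [intervalIntegral.integral_eq_sub_of_hasDerivAt_of_le hM (by fun_prop) hderiv
    ((by fun_prop : Continuous fun t => t * √(M - t)).intervalIntegrable _ _)]
  simp only [G, sub_self, sub_zero]
  ring

theorem abs_mul_sqrt_sub_mul_le {s M v : ℝ} (hs : s ≤ M) :
    |s * √(M - s) / √3 * v| ≤ 1 / 2 * v ^ 2 + (M * s ^ 2 - s ^ 3) / 6 := by
  have hw : (s * √(M - s) / √3) ^ 2 = (M * s ^ 2 - s ^ 3) / 3 := by
    rw [div_pow, mul_pow, sq_sqrt (sub_nonneg.2 hs), sq_sqrt (by norm_num)]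
    ring
  rw [abs_mul]
  nlinarith [sq_nonneg (|s * √(M - s) / √3| - |v|), sq_abs (s * √(M - s) / √3), sq_abs v]

theorem two_mul_integral_mul_sqrt_sub_le {g g' : ℝ → ℝ} {M x₀ : ℝ}
    (hd : ∀ x, HasDerivAt g (g' x) x) (hg' : AEStronglyMeasurable g')
    (hdecay : Tendsto g (cocompact ℝ) (𝓝 0)) (hle : ∀ x, g x ≤ M) (hx₀ : g x₀ = M)
    (hF : Integrable fun x => 1 / 2 * g' x ^ 2 + (M * g x ^ 2 - g x ^ 3) / 6) :
    2 * ((∫ t in (0 : ℝ)..M, t * √(M - t)) / √3) ≤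
      ∫ x, (1 / 2 * g' x ^ 2 + (M * g x ^ 2 - g x ^ 3) / 6) := by
  set φ : ℝ → ℝ := fun t => t * √(M - t) / √3
  have hφ : Continuous φ := by fun_prop
  set Φ : ℝ → ℝ := fun s => ∫ t in (0 : ℝ)..s, φ t
  have hΦ (s : ℝ) : HasDerivAt Φ (φ s) s := (hφ.integral_hasStrictDerivAt 0 s).hasDerivAt
  have hΦ_cont : Continuous Φ := continuous_iff_continuousAt.2 fun s => (hΦ s).continuousAt
  have hg : Continuous g := continuous_iff_continuousAt.2 fun x => (hd x).continuousAt
  have hu (x : ℝ) : HasDerivAt (fun x => Φ (g x)) (φ (g x) * g' x) x := (hΦ (g x)).comp x (hd x)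
  have hbound (x : ℝ) : |φ (g x) * g' x| ≤ 1 / 2 * g' x ^ 2 + (M * g x ^ 2 - g x ^ 3) / 6 :=
    abs_mul_sqrt_sub_mul_le (hle x)
  have hu' : Integrable fun x => φ (g x) * g' x :=
    hF.mono' ((hφ.comp hg).aestronglyMeasurable.mul hg') (Eventually.of_forall hbound)
  have hlim : Tendsto (fun x => Φ (g x)) (cocompact ℝ) (𝓝 0) := by
    have h := (hΦ_cont.tendsto 0).comp hdecay
    rwa [show Φ 0 = 0 from intervalIntegral.integral_same] at h
  calc 2 * ((∫ t in (0 : ℝ)..M, t * √(M - t)) / √3) = 2 * Φ (g x₀) := by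
        rw [hx₀, ← intervalIntegral.integral_div]
    _ ≤ 2 * |Φ (g x₀)| := by gcongr; exact le_abs_self _
    _ ≤ ∫ x, |φ (g x) * g' x| :=
        two_mul_abs_le_integral_abs_of_hasDerivAt hu hu'
          (hlim.mono_left atBot_le_cocompact) (hlim.mono_left atTop_le_cocompact) x₀
    _ ≤ _ := integral_mono hu'.abs hF hbound

theorem five_mul_sq_mul_pow_three_le {x y : ℝ} (hx : 0 ≤ x) (hy : 0 ≤ y) :
    5 * x ^ 2 * y ^ 3 ≤ 2 * x ^ 5 + 3 * y ^ 5 := by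
  have hc : 0 ≤ 2 * x ^ 3 + 4 * x ^ 2 * y + 6 * x * y ^ 2 + 3 * y ^ 3 := by positivity
  nlinarith [mul_nonneg (sq_nonneg (x - y)) hc]

theorem exists_nonneg_eq_twelve_mul_pow_three {a : ℝ} (ha : 0 ≤ a) :
    ∃ s : ℝ, 0 ≤ s ∧ a = 12 * s ^ 3 ∧
      (1 / 12 : ℝ) ^ ((5 : ℝ) / 3) * a ^ ((5 : ℝ) / 3) = s ^ 5 := by
  have ha' : 0 ≤ a / 12 := by positivity
  refine ⟨(a / 12) ^ ((1 : ℝ) / 3), by positivity, ?_, ?_⟩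
  · rw [← rpow_natCast, ← rpow_mul ha']
    norm_num
    ring
  · rw [← mul_rpow (by norm_num) ha, ← rpow_natCast, ← rpow_mul ha']
    norm_num
    ring_nf

theorem neg_mu_mul_rpow_le {a M : ℝ} (ha : 0 ≤ a) (hM : 0 ≤ M) :
    -(36 / 5) * (1 / 12 : ℝ) ^ ((5 : ℝ) / 3) * a ^ ((5 : ℝ) / 3) ≤
      2 * (4 / 15 * M ^ 2 * √M / √3) - M / 3 * a := by
  obtain ⟨s, hs, has, hμ⟩ := exists_nonneg_eq_twelve_mul_pow_three ha
  rw [mul_assoc, hμ, has]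
  obtain ⟨m, hm, rfl⟩ : ∃ m, 0 ≤ m ∧ M = m ^ 2 := ⟨√M, sqrt_nonneg M, (sq_sqrt hM).symm⟩
  have ht : (0 : ℝ) < √3 := by positivity
  have ht2 : √3 ^ 2 = 3 := sq_sqrt (by norm_num)
  have hamgm := five_mul_sq_mul_pow_three_le hm (mul_nonneg ht.le hs)
  have e3 : (√3 * s) ^ 3 = 3 * √3 * s ^ 3 := by
    rw [mul_pow, pow_succ, ht2]
  have e5 : (√3 * s) ^ 5 = 9 * √3 * s ^ 5 := by
    rw [mul_pow, show √3 ^ 5 = (√3 ^ 2) ^ 2 * √3 by ring, ht2]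
    ring
  rw [e3, e5] at hamgm
  have hdiv : 4 / 15 * (m ^ 2) ^ 2 * √(m ^ 2) / √3 = 4 * √3 * m ^ 5 / 45 := by
    rw [sqrt_sq hm]
    field_simp
    rw [ht2]
    ring
  have key : 45 * m ^ 2 * s ^ 3 ≤ 2 * √3 * m ^ 5 + 81 * s ^ 5 := by
    linear_combination √3 * hamgm + (27 * s ^ 5 - 15 * m ^ 2 * s ^ 3) * ht2
  rw [hdiv]
  linarith

theorem neg_mu_mul_rpow_le_energy {g g' : ℝ → ℝ} (hd : ∀ x, HasDerivAt g (g' x) x)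
    (hg : MemLp g 2) (hg' : MemLp g' 2) :
    -(36 / 5) * ((1 : ℝ) / 12) ^ ((5 : ℝ) / 3) * ((1 / 2) * ∫ x, g x ^ 2) ^ ((5 : ℝ) / 3) ≤
      ∫ x, ((1 / 2) * g' x ^ 2 - (1 / 6) * g x ^ 3) := by
  have hcont : Continuous g := continuous_iff_continuousAt.2 fun x => (hd x).continuousAt
  have hdecay := tendsto_cocompact_zero_of_memLp_two hd hg hg'
  have ha : 0 ≤ (1 / 2) * ∫ x, g x ^ 2 :=
    mul_nonneg (by norm_num) (integral_nonneg fun x => sq_nonneg (g x))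
  obtain hnonpos | ⟨x₁, hx₁⟩ := forall_or_exists_not fun x => g x ≤ 0
  · calc _ ≤ (0 : ℝ) := by
          have := rpow_nonneg (show (0 : ℝ) ≤ 1 / 12 by norm_num) ((5 : ℝ) / 3)
          have := rpow_nonneg ha ((5 : ℝ) / 3)
          nlinarith
      _ ≤ _ := integral_nonneg fun x => by
          have := mul_nonpos_of_nonpos_of_nonneg (hnonpos x) (sq_nonneg (g x))
          simp only [Pi.zero_apply]
          nlinarith [sq_nonneg (g' x)]
  rw [not_le] at hx₁
  obtain ⟨x₀, hmax⟩ := hcont.exists_forall_ge' x₁ (hdecay.eventually (eventually_le_nhds hx₁))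
  have hM : 0 < g x₀ := hx₁.trans_le (hmax x₁)
  have hsq : Integrable fun x => g x ^ 2 := hg.integrable_sq
  have hE : Integrable fun x => (1 / 2) * g' x ^ 2 - (1 / 6) * g x ^ 3 :=
    (hg'.integrable_sq.const_mul _).sub
      ((hsq.pow_three_of_tendsto_cocompact hcont hdecay).const_mul _)
  have hF : (fun x => 1 / 2 * g' x ^ 2 + (g x₀ * g x ^ 2 - g x ^ 3) / 6) =
      fun x => ((1 / 2) * g' x ^ 2 - (1 / 6) * g x ^ 3) + g x₀ / 6 * g x ^ 2 := by
    ext x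
    ring
  have key := two_mul_integral_mul_sqrt_sub_le hd hg'.aestronglyMeasurable hdecay hmax rfl
    (hF ▸ hE.add (hsq.const_mul _))
  rw [hF, integral_add hE (hsq.const_mul _), integral_const_mul,
    integral_mul_sqrt_sub hM.le] at key
  linarith [neg_mu_mul_rpow_le ha hM.le]

theorem hasDerivAt_tanh (x : ℝ) : HasDerivAt tanh (1 / cosh x ^ 2) x := by
  have h := (hasDerivAt_sinh x).div (hasDerivAt_cosh x) (cosh_pos x).ne'
  rw [show tanh = sinh / cosh from funext tanh_eq_sinh_div_cosh]
  exact h.congr_deriv (by rw [← cosh_sq_sub_sinh_sq x]; ring)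

theorem continuous_tanh : Continuous tanh :=
  continuous_iff_continuousAt.2 fun x => (hasDerivAt_tanh x).continuousAt

theorem tanh_eq_one_sub_two_div (x : ℝ) : tanh x = 1 - 2 / (exp (2 * x) + 1) := by
  have h : exp (2 * x) = exp x * exp x := by rw [← exp_add]; ring_nf
  rw [tanh_eq, exp_neg, h]
  have := exp_pos x
  field_simp
  ring

theorem tendsto_tanh_atTop : Tendsto tanh atTop (𝓝 1) := by
  have h : Tendsto (fun x : ℝ => exp (2 * x) + 1) atTop atTop :=
    tendsto_atTop_add_const_right _ 1
      (tendsto_exp_atTop.comp (tendsto_id.const_mul_atTop two_pos))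
  simpa [← tanh_eq_one_sub_two_div] using (h.const_div_atTop 2).const_sub 1

theorem tendsto_tanh_atBot : Tendsto tanh atBot (𝓝 (-1)) := by
  simpa [Function.comp_def] using (tendsto_tanh_atTop.comp tendsto_neg_atBot_atTop).neg

theorem continuous_one_div_cosh_pow (n : ℕ) : Continuous fun x => 1 / cosh x ^ n :=
  continuous_const.div (by fun_prop) fun x => pow_ne_zero n (cosh_pos x).ne'

theorem integrable_one_div_cosh_sq : Integrable fun x => 1 / cosh x ^ 2 := by
  have hcont := continuous_one_div_cosh_pow 2
  refine integrable_of_intervalIntegral_norm_bounded 2 (fun i => hcont.integrableOn_Ioc)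
    tendsto_neg_atTop_atBot tendsto_id (Eventually.of_forall fun i => ?_)
  have hnorm : ∀ x : ℝ, ‖1 / cosh x ^ 2‖ = 1 / cosh x ^ 2 := fun x =>
    Real.norm_of_nonneg (by positivity)
  simp only [hnorm, id]
  rw [intervalIntegral.integral_eq_sub_of_hasDerivAt (fun x _ => hasDerivAt_tanh x)
    (hcont.intervalIntegrable _ _)]
  linarith [tanh_lt_one i, neg_one_lt_tanh (-i)]

theorem integrable_one_div_cosh_pow {n : ℕ} (hn : 2 ≤ n) :
    Integrable fun x => 1 / cosh x ^ n := by
  obtain ⟨k, rfl⟩ := Nat.exists_eq_add_of_le hn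
  refine (integrable_one_div_cosh_sq.bdd_mul (c := 1) (f := fun x => 1 / cosh x ^ k)
    (continuous_one_div_cosh_pow k).aestronglyMeasurable
    (Eventually.of_forall fun x => ?_)).congr (Eventually.of_forall fun x => ?_)
  · rw [Real.norm_of_nonneg (by positivity)]
    exact div_le_one_of_le₀ (one_le_pow₀ (one_le_cosh x)) (by positivity)
  · simp only
    ring

theorem integral_comp_tanh_mul_one_div_cosh_sq {P p : ℝ → ℝ} (hP : ∀ y, HasDerivAt P (p y) y)
    (hp : Continuous p) : ∫ x, p (tanh x) * (1 / cosh x ^ 2) = P 1 - P (-1) := by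
  have hPc : Continuous P := continuous_iff_continuousAt.2 fun y => (hP y).continuousAt
  obtain ⟨C, hC⟩ := isCompact_Icc.exists_bound_of_continuousOn (s := Icc (-1 : ℝ) 1)
    hp.continuousOn
  have hint : Integrable (fun x => p (tanh x) * (1 / cosh x ^ 2)) :=
    integrable_one_div_cosh_sq.bdd_mul (hp.comp continuous_tanh).aestronglyMeasurable
      (Eventually.of_forall fun x => hC _ ⟨(neg_one_lt_tanh x).le, (tanh_lt_one x).le⟩)
  exact integral_of_hasDerivAt_of_tendsto (fun x => (hP (tanh x)).comp x (hasDerivAt_tanh x))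
    hint ((hPc.tendsto _).comp tendsto_tanh_atBot) ((hPc.tendsto _).comp tendsto_tanh_atTop)

theorem one_sub_tanh_sq (x : ℝ) : 1 - tanh x ^ 2 = 1 / cosh x ^ 2 := by
  have := (cosh_pos x).ne'
  rw [tanh_eq_sinh_div_cosh, div_pow, sinh_sq]
  field_simp
  ring

theorem integral_one_div_cosh_pow_four : ∫ x, 1 / cosh x ^ 4 = 4 / 3 := by
  have hP (y : ℝ) : HasDerivAt (fun y => y - y ^ 3 / 3) (1 - y ^ 2) y :=
    ((hasDerivAt_id' y).fun_sub ((hasDerivAt_pow 3 y).div_const 3)).congr_deriv (by norm_num)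
  have h : ∫ x, (1 - tanh x ^ 2) * (1 / cosh x ^ 2) = 4 / 3 := by
    rw [integral_comp_tanh_mul_one_div_cosh_sq hP (by fun_prop)]
    norm_num
  rw [← h]
  congr 1 with x
  rw [one_sub_tanh_sq]
  ring

theorem integral_one_div_cosh_pow_six : ∫ x, 1 / cosh x ^ 6 = 16 / 15 := by
  have hP (y : ℝ) :
      HasDerivAt (fun y => y - 2 * y ^ 3 / 3 + y ^ 5 / 5) ((1 - y ^ 2) ^ 2) y :=
    (((hasDerivAt_id' y).fun_sub (((hasDerivAt_pow 3 y).const_mul 2).div_const 3)).fun_add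
      ((hasDerivAt_pow 5 y).div_const 5)).congr_deriv (by norm_num; ring)
  have h : ∫ x, (1 - tanh x ^ 2) ^ 2 * (1 / cosh x ^ 2) = 16 / 15 := by
    rw [integral_comp_tanh_mul_one_div_cosh_sq hP (by fun_prop)]
    norm_num
  rw [← h]
  congr 1 with x
  rw [one_sub_tanh_sq]
  ring

theorem integral_one_div_cosh_mul_pow {β : ℝ} (hβ : 0 < β) (n : ℕ) :
    ∫ x, 1 / cosh (β * x) ^ n = (∫ x, 1 / cosh x ^ n) / β := by
  rw [Measure.integral_comp_mul_left (fun x => 1 / cosh x ^ n), abs_of_pos (inv_pos.2 hβ),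
    smul_eq_mul, inv_mul_eq_div]

section SechSquared

variable (α β : ℝ)

theorem hasDerivAt_div_cosh_mul_sq (x : ℝ) :
    HasDerivAt (fun x => α / cosh (β * x) ^ 2)
      (-2 * α * β * sinh (β * x) / cosh (β * x) ^ 3) x := by
  have hc := (cosh_pos (β * x)).ne'
  have h := (((hasDerivAt_id' x).const_mul β).cosh.fun_pow 2)
  refine ((hasDerivAt_const x α).fun_div h (pow_ne_zero 2 hc)).congr_deriv ?_
  field_simp
  ring

theorem hasDerivAt_sinh_div_cosh_mul_cube (x : ℝ) :
    HasDerivAt (fun x => -2 * α * β * sinh (β * x) / cosh (β * x) ^ 3)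
      (α * β ^ 2 * (4 / cosh (β * x) ^ 2 - 6 / cosh (β * x) ^ 4)) x := by
  have hc := (cosh_pos (β * x)).ne'
  have hb := (hasDerivAt_id' x).const_mul β
  have h := (hb.sinh.const_mul (-2 * α * β)).fun_div (hb.cosh.fun_pow 3) (pow_ne_zero 3 hc)
  refine h.congr_deriv ?_
  field_simp
  rw [sinh_sq]
  norm_num
  ring

variable {α β}

theorem memLp_two_of_abs_le_div_cosh_mul_sq (hβ : β ≠ 0) {f : ℝ → ℝ} (hf : Continuous f)
    (C : ℝ) (hfC : ∀ x, |f x| ≤ C / cosh (β * x) ^ 2) : MemLp f 2 := by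
  have hdom : MemLp (fun x => C / cosh (β * x) ^ 2) 2 := by
    have hcont : Continuous fun x => C / cosh (β * x) ^ 2 :=
      continuous_const.div (by fun_prop) fun x => pow_ne_zero 2 (cosh_pos _).ne'
    rw [memLp_two_iff_integrable_sq hcont.aestronglyMeasurable]
    refine (((integrable_one_div_cosh_pow (n := 4) (by norm_num)).comp_mul_left' hβ).const_mul
      (C ^ 2)).congr (Eventually.of_forall fun x => ?_)
    simp only
    ring
  refine hdom.of_le hf.aestronglyMeasurable (Eventually.of_forall fun x => ?_)
  rw [Real.norm_eq_abs, Real.norm_eq_abs]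
  exact (hfC x).trans (le_abs_self _)

theorem integral_sq_div_cosh_mul_sq (hβ : 0 < β) :
    ∫ x, (α / cosh (β * x) ^ 2) ^ 2 = 4 * α ^ 2 / (3 * β) := by
  have h (x : ℝ) : (α / cosh (β * x) ^ 2) ^ 2 = α ^ 2 * (1 / cosh (β * x) ^ 4) := by ring
  simp only [h]
  rw [integral_const_mul, integral_one_div_cosh_mul_pow hβ, integral_one_div_cosh_pow_four]
  field_simp

theorem integral_energy_div_cosh_mul_sq (hβ : 0 < β) :
    ∫ x, ((1 / 2) * (-2 * α * β * sinh (β * x) / cosh (β * x) ^ 3) ^ 2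
        - (1 / 6) * (α / cosh (β * x) ^ 2) ^ 3)
      = 8 * α ^ 2 * β / 15 - 8 * α ^ 3 / (45 * β) := by
  have h (x : ℝ) : (1 / 2) * (-2 * α * β * sinh (β * x) / cosh (β * x) ^ 3) ^ 2
        - (1 / 6) * (α / cosh (β * x) ^ 2) ^ 3
      = 2 * α ^ 2 * β ^ 2 * (1 / cosh (β * x) ^ 4)
        - (2 * α ^ 2 * β ^ 2 + α ^ 3 / 6) * (1 / cosh (β * x) ^ 6) := by
    have := (cosh_pos (β * x)).ne'
    field_simp
    rw [sinh_sq]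
    ring
  have hint (n : ℕ) (hn : 2 ≤ n) : Integrable fun x => 1 / cosh (β * x) ^ n :=
    (integrable_one_div_cosh_pow hn).comp_mul_left' hβ.ne'
  simp only [h]
  rw [integral_sub ((hint 4 (by norm_num)).const_mul _) ((hint 6 (by norm_num)).const_mul _),
    integral_const_mul, integral_const_mul, integral_one_div_cosh_mul_pow hβ,
    integral_one_div_cosh_mul_pow hβ, integral_one_div_cosh_pow_four,
    integral_one_div_cosh_pow_six]
  field_simp
  ring

end SechSquared

theorem exists_sech_sq_of_neg_mu_le {a b : ℝ} (ha : 0 < a)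
    (hb : -(36 / 5) * ((1 : ℝ) / 12) ^ ((5 : ℝ) / 3) * a ^ ((5 : ℝ) / 3) ≤ b) :
    ∃ α β : ℝ, 0 < α ∧ 0 < β ∧ (1 / 2) * (4 * α ^ 2 / (3 * β)) = a ∧
      8 * α ^ 2 * β / 15 - 8 * α ^ 3 / (45 * β) = b := by
  obtain ⟨s, hs₀, has, hμ⟩ := exists_nonneg_eq_twelve_mul_pow_three ha.le
  have hs : 0 < s := lt_of_pow_lt_pow_left₀ 3 hs₀ (by linarith)
  set f : ℝ → ℝ := fun α => α * (16 / (45 * a) * α ^ 3 - 4 * a / 15) with hf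
  have hf_top : Tendsto f atTop atTop :=
    tendsto_id.atTop_mul_atTop₀ (tendsto_atTop_add_const_right _ _
      ((tendsto_pow_atTop (by norm_num)).const_mul_atTop (by positivity)))
  have hf_min : f (3 * s ^ 2) = -(36 / 5) * s ^ 5 := by
    simp only [hf, has]
    field_simp
    ring
  obtain ⟨α, hα_ge, hfα⟩ := intermediate_value_Ici (by fun_prop) hf_top
    (show b ∈ Ici (f (3 * s ^ 2)) by rw [hf_min, ← hμ, ← mul_assoc]; exact hb)
  have hα : 0 < α := lt_of_lt_of_le (by positivity) hα_ge
  refine ⟨α, 2 * α ^ 2 / (3 * a), hα, by positivity, ?_, ?_⟩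
  · field_simp
    norm_num
  · rw [← hfα, hf]
    field_simp
    ring

theorem exists_energies_eq_of_neg_mu_le {a b : ℝ} (ha : 0 < a)
    (hb : -(36 / 5) * ((1 : ℝ) / 12) ^ ((5 : ℝ) / 3) * a ^ ((5 : ℝ) / 3) ≤ b) :
    ∃ g g' g'' : ℝ → ℝ,
      (∀ x, HasDerivAt g (g' x) x) ∧ (∀ x, HasDerivAt g' (g'' x) x) ∧
      MemLp g 2 (volume : Measure ℝ) ∧ MemLp g' 2 (volume : Measure ℝ) ∧
      MemLp g'' 2 (volume : Measure ℝ) ∧ g ≠ 0 ∧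
      (1 / 2) * (∫ x : ℝ, (g x) ^ 2) = a ∧
      (∫ x : ℝ, ((1 / 2) * (g' x) ^ 2 - (1 / 6) * (g x) ^ 3)) = b := by
  obtain ⟨α, β, hα, hβ, hmass, henergy⟩ := exists_sech_sq_of_neg_mu_le ha hb
  have hd := hasDerivAt_div_cosh_mul_sq α β
  have hd' := hasDerivAt_sinh_div_cosh_mul_cube α β
  refine ⟨_, _, _, hd, hd', ?_, ?_, ?_, fun h => by simpa [hα.ne'] using congrFun h 0,
    by rw [integral_sq_div_cosh_mul_sq hβ, hmass],
    by rw [integral_energy_div_cosh_mul_sq hβ, henergy]⟩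
  · refine memLp_two_of_abs_le_div_cosh_mul_sq hβ.ne'
      (continuous_iff_continuousAt.2 fun x => (hd x).continuousAt) α fun x => ?_
    rw [abs_of_pos (by positivity)]
  · refine memLp_two_of_abs_le_div_cosh_mul_sq hβ.ne'
      (continuous_iff_continuousAt.2 fun x => (hd' x).continuousAt) (2 * α * β) fun x => ?_
    have hc := cosh_pos (β * x)
    have hs : |sinh (β * x)| ≤ cosh (β * x) := by
      rw [abs_sinh, ← cosh_abs]
      exact (sinh_lt_cosh _).le
    calc |-2 * α * β * sinh (β * x) / cosh (β * x) ^ 3|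
        = 2 * α * β * |sinh (β * x)| / cosh (β * x) ^ 3 := by
          rw [abs_div, abs_mul, abs_of_pos (pow_pos hc 3), abs_of_neg (by nlinarith)]
          ring
      _ ≤ 2 * α * β * cosh (β * x) / cosh (β * x) ^ 3 := by gcongr
      _ = 2 * α * β / cosh (β * x) ^ 2 := by field_simp
  · refine memLp_two_of_abs_le_div_cosh_mul_sq hβ.ne'
      (by fun_prop (disch := exact fun x => (pow_pos (cosh_pos _) _).ne')) (4 * α * β ^ 2)
      fun x => ?_
    set u := 1 / cosh (β * x) ^ 2 with hu
    have hu0 : 0 < u := by positivity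
    have hu1 : u ≤ 1 := div_le_one_of_le₀ (one_le_pow₀ (one_le_cosh _)) (by positivity)
    calc |α * β ^ 2 * (4 / cosh (β * x) ^ 2 - 6 / cosh (β * x) ^ 4)|
        = α * β ^ 2 * u * |4 - 6 * u| := by
          rw [show α * β ^ 2 * (4 / cosh (β * x) ^ 2 - 6 / cosh (β * x) ^ 4)
              = α * β ^ 2 * u * (4 - 6 * u) by rw [hu]; ring,
            abs_mul, abs_of_pos (by positivity)]
      _ ≤ α * β ^ 2 * u * 4 := by
          gcongr
          rw [abs_le]
          constructor <;> linarith
      _ = 4 * α * β ^ 2 / cosh (β * x) ^ 2 := by rw [hu]; ring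

theorem feasible_constraint_set :
    (∀ g g' g'' : ℝ → ℝ,
      (∀ x, HasDerivAt g (g' x) x) → (∀ x, HasDerivAt g' (g'' x) x) →
      MemLp g 2 (volume : Measure ℝ) → MemLp g' 2 (volume : Measure ℝ) →
      MemLp g'' 2 (volume : Measure ℝ) → g ≠ 0 →
      0 < (1 / 2) * (∫ x : ℝ, (g x) ^ 2) ∧
        -(36 / 5) * ((1 : ℝ) / 12) ^ ((5 : ℝ) / 3)
            * ((1 / 2) * (∫ x : ℝ, (g x) ^ 2)) ^ ((5 : ℝ) / 3) ≤
          ∫ x : ℝ, ((1 / 2) * (g' x) ^ 2 - (1 / 6) * (g x) ^ 3)) ∧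
    (∀ a b : ℝ, 0 < a →
      -(36 / 5) * ((1 : ℝ) / 12) ^ ((5 : ℝ) / 3) * a ^ ((5 : ℝ) / 3) ≤ b →
      ∃ g g' g'' : ℝ → ℝ,
        (∀ x, HasDerivAt g (g' x) x) ∧ (∀ x, HasDerivAt g' (g'' x) x) ∧
        MemLp g 2 (volume : Measure ℝ) ∧ MemLp g' 2 (volume : Measure ℝ) ∧
        MemLp g'' 2 (volume : Measure ℝ) ∧ g ≠ 0 ∧
        (1 / 2) * (∫ x : ℝ, (g x) ^ 2) = a ∧
        (∫ x : ℝ, ((1 / 2) * (g' x) ^ 2 - (1 / 6) * (g x) ^ 3)) = b) := by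
  refine ⟨fun g g' _ hd _ hg hg' _ hne => ⟨?_, neg_mu_mul_rpow_le_energy hd hg hg'⟩,
    fun a b ha hb => exists_energies_eq_of_neg_mu_le ha hb⟩
  have hcont : Continuous g := continuous_iff_continuousAt.2 fun x => (hd x).continuousAt
  have := integral_sq_pos_of_ne_zero hcont hg.integrable_sq hne
  positivity
end
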